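/- arXiv:1306.6761 — 7 statements merged into one kernel-verified Lean document; each statement's English description precedes it below -/
import Mathlib

section
/- For every probability measure μ on ℝ^d, every starting point x ∈ ℝ^d, every z ∈ K* and every n ≥ 1, one has P_μ^x[τ_K > n] ≤ L_μ(z)^n e^{⟨z,x⟩}. Consequently, limsup_{n→∞} (P_μ^x[τ_K > n])^{1/n} ≤ inf_{z ∈ K*} L_μ(z) for all x ∈ ℝ^d. -/
open MeasureTheory ProbabilityTheory Filter
open scoped ENNReal RealInnerProductSpace Topology

/-- The Laplace transform of a measure `μ` on `ℝ^d`, with values in `ℝ≥0∞`. -/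
noncomputable def laplace {d : ℕ} (μ : Measure (EuclideanSpace ℝ (Fin d)))
    (x : EuclideanSpace ℝ (Fin d)) : ℝ≥0∞ :=
  ∫⁻ y, ENNReal.ofReal (Real.exp ⟪x, y⟫) ∂μ

/-- The dual cone `K* = {z : ⟨x,z⟩ ≥ 0 for all x ∈ K}`. -/
def dualCone {d : ℕ} (K : Set (EuclideanSpace ℝ (Fin d))) : Set (EuclideanSpace ℝ (Fin d)) :=
  {z | ∀ x ∈ K, 0 ≤ ⟪x, z⟫}

/-!
On the event `τ_K > n` the position `S_n = x + X₀ + ⋯ + X_{n-1}` lies in `K`, so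
`⟪z, S_n⟫ ≥ 0` for `z ∈ K*`, i.e. `e^{⟪z, S_n⟫} ≥ 1`. Markov's inequality bounds the probability
of this event by `E[e^{⟪z, S_n⟫}]`, which by independence factorises as `e^{⟪z, x⟫} L_μ(z)^n`.
Taking `n`-th roots, the constant `e^{⟪z, x⟫}` disappears in the limit.
-/

theorem lintegral_prod_comp_eq_pow {Ω α ι : Type*} [MeasurableSpace Ω] [MeasurableSpace α]
    {P : Measure Ω} {μ : Measure α} {X : ι → Ω → α} (hXmeas : ∀ i, Measurable (X i))
    (hXindep : iIndepFun X P) (hXlaw : ∀ i, P.map (X i) = μ)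
    {g : α → ℝ≥0∞} (hg : Measurable g) (s : Finset ι) :
    ∫⁻ ω, ∏ i ∈ s, g (X i ω) ∂P = (∫⁻ y, g y ∂μ) ^ s.card := by
  rw [lintegral_prod_eq_prod_lintegral_of_indepFun s (fun i ω ↦ g (X i ω))
    (hXindep.comp (fun _ ↦ g) fun _ ↦ hg) fun i ↦ hg.comp (hXmeas i), ← Finset.prod_const]
  refine Finset.prod_congr rfl fun i _ ↦ ?_
  rw [← hXlaw i, lintegral_map hg (hXmeas i)]

theorem lintegral_exp_inner_add_sum {d : ℕ} {Ω ι : Type*} [MeasurableSpace Ω] {P : Measure Ω}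
    {μ : Measure (EuclideanSpace ℝ (Fin d))} {X : ι → Ω → EuclideanSpace ℝ (Fin d)}
    (hXmeas : ∀ i, Measurable (X i)) (hXindep : iIndepFun X P)
    (hXlaw : ∀ i, P.map (X i) = μ) (x z : EuclideanSpace ℝ (Fin d)) (s : Finset ι) :
    ∫⁻ ω, ENNReal.ofReal (Real.exp ⟪z, x + ∑ i ∈ s, X i ω⟫) ∂P
      = laplace μ z ^ s.card * ENNReal.ofReal (Real.exp ⟪z, x⟫) := by
  have hsplit : ∀ ω, ENNReal.ofReal (Real.exp ⟪z, x + ∑ i ∈ s, X i ω⟫)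
      = ENNReal.ofReal (Real.exp ⟪z, x⟫) * ∏ i ∈ s, ENNReal.ofReal (Real.exp ⟪z, X i ω⟫) := by
    intro ω
    rw [inner_add_right, inner_sum, Real.exp_add, Real.exp_sum,
      ENNReal.ofReal_mul (Real.exp_nonneg _),
      ENNReal.ofReal_prod_of_nonneg fun i _ ↦ Real.exp_nonneg _]
  simp_rw [hsplit]
  rw [lintegral_const_mul _ (by fun_prop), lintegral_prod_comp_eq_pow hXmeas hXindep hXlaw
    (g := fun y ↦ ENNReal.ofReal (Real.exp ⟪z, y⟫)) (by fun_prop), laplace, mul_comm]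

/-- The event `τ_K > n`. -/
def nonexitEvent {d : ℕ} {Ω : Type*} (K : Set (EuclideanSpace ℝ (Fin d)))
    (x : EuclideanSpace ℝ (Fin d)) (X : ℕ → Ω → EuclideanSpace ℝ (Fin d)) (n : ℕ) : Set Ω :=
  {ω | ∀ k : ℕ, 1 ≤ k → k ≤ n → x + ∑ i ∈ Finset.range k, X i ω ∈ K}

theorem measure_nonexitEvent_le {d : ℕ} {Ω : Type*} [MeasurableSpace Ω] {P : Measure Ω}
    {μ : Measure (EuclideanSpace ℝ (Fin d))} {X : ℕ → Ω → EuclideanSpace ℝ (Fin d)}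
    (hXmeas : ∀ i, Measurable (X i)) (hXindep : iIndepFun X P)
    (hXlaw : ∀ i, P.map (X i) = μ) {K : Set (EuclideanSpace ℝ (Fin d))}
    (x : EuclideanSpace ℝ (Fin d)) {z : EuclideanSpace ℝ (Fin d)} (hz : z ∈ dualCone K)
    {n : ℕ} (hn : 1 ≤ n) :
    P (nonexitEvent K x X n) ≤ laplace μ z ^ n * ENNReal.ofReal (Real.exp ⟪z, x⟫) := by
  calc P (nonexitEvent K x X n)
      ≤ ∫⁻ ω, ENNReal.ofReal (Real.exp ⟪z, x + ∑ i ∈ Finset.range n, X i ω⟫) ∂P := by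
        refine meas_le_lintegral₀ (by fun_prop) fun ω hω ↦ ?_
        have hinner := hz _ (hω n hn le_rfl)
        rw [real_inner_comm] at hinner
        exact ENNReal.one_le_ofReal.2 (Real.one_le_exp hinner)
    _ = laplace μ z ^ n * ENNReal.ofReal (Real.exp ⟪z, x⟫) := by
        rw [lintegral_exp_inner_add_sum hXmeas hXindep hXlaw, Finset.card_range]

theorem limsup_rpow_inv_le_of_le_pow_mul {a : ℕ → ℝ≥0∞} {L : ℝ≥0∞} {c : ℝ} (hc : 0 < c)
    (h : ∀ᶠ n in atTop, a n ≤ L ^ n * ENNReal.ofReal c) :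
    limsup (fun n : ℕ ↦ a n ^ (n : ℝ)⁻¹) atTop ≤ L := by
  have hroot : ∀ᶠ n : ℕ in atTop, a n ^ (n : ℝ)⁻¹ ≤ L * ENNReal.ofReal (c ^ (n : ℝ)⁻¹) := by
    filter_upwards [h, eventually_ne_atTop 0] with n han hn
    calc a n ^ (n : ℝ)⁻¹ ≤ (L ^ n * ENNReal.ofReal c) ^ (n : ℝ)⁻¹ :=
          ENNReal.rpow_le_rpow han (by positivity)
      _ = L * ENNReal.ofReal (c ^ (n : ℝ)⁻¹) := by
          rw [ENNReal.mul_rpow_of_nonneg _ _ (by positivity), ENNReal.pow_rpow_inv_natCast hn,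
            ENNReal.ofReal_rpow_of_pos hc]
  have hlim : Tendsto (fun n : ℕ ↦ L * ENNReal.ofReal (c ^ (n : ℝ)⁻¹)) atTop (𝓝 L) := by
    have hcroot : Tendsto (fun n : ℕ ↦ c ^ (n : ℝ)⁻¹) atTop (𝓝 1) := by
      simpa [Function.comp_def] using ((Real.continuousAt_const_rpow hc.ne').tendsto).comp
        tendsto_inv_atTop_nhds_zero_nat
    simpa using ENNReal.Tendsto.const_mul
      (ENNReal.tendsto_ofReal hcroot) (Or.inl (by simp))
  exact (limsup_le_limsup hroot).trans hlim.limsup_eq.le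

theorem nonexit_upper_bound_dual_cone_general
    {d : ℕ}
    (K : Set (EuclideanSpace ℝ (Fin d)))
    (μ : Measure (EuclideanSpace ℝ (Fin d)))
    (Ω : Type) [MeasurableSpace Ω] (P : Measure Ω)
    (X : ℕ → Ω → EuclideanSpace ℝ (Fin d))
    (hXmeas : ∀ n, Measurable (X n))
    (hXindep : iIndepFun X P)
    (hXlaw : ∀ n, Measure.map (X n) P = μ) :
    (∀ x : EuclideanSpace ℝ (Fin d), ∀ z ∈ dualCone K, ∀ n : ℕ, 1 ≤ n →
      P {ω | ∀ k : ℕ, 1 ≤ k → k ≤ n → x + ∑ i ∈ Finset.range k, X i ω ∈ K}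
        ≤ laplace μ z ^ n * ENNReal.ofReal (Real.exp ⟪z, x⟫)) ∧
    (∀ x : EuclideanSpace ℝ (Fin d),
      limsup (fun n : ℕ =>
          P {ω | ∀ k : ℕ, 1 ≤ k → k ≤ n →
              x + ∑ i ∈ Finset.range k, X i ω ∈ K} ^ ((n : ℝ)⁻¹)) atTop
        ≤ ⨅ z ∈ dualCone K, laplace μ z) := by
  refine ⟨fun x z hz n hn ↦ measure_nonexitEvent_le hXmeas hXindep hXlaw x hz hn,
    fun x ↦ le_iInf₂ fun z hz ↦ limsup_rpow_inv_le_of_le_pow_mul (Real.exp_pos ⟪z, x⟫) ?_⟩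
  filter_upwards [eventually_ge_atTop 1] with n hn
  exact measure_nonexitEvent_le hXmeas hXindep hXlaw x hz hn

/-- For every starting point `x`, every `z ∈ K*` and every `n ≥ 1`,
`P^x[τ_K > n] ≤ L_μ(z)^n e^{⟨z,x⟩}`; consequently the limsup of the `n`-th root of
the non-exit probability is at most `inf_{K*} L_μ`. -/
theorem nonexit_upper_bound_dual_cone
    {d : ℕ} (hd : 1 ≤ d)
    (K : Set (EuclideanSpace ℝ (Fin d)))
    (hKclosed : IsClosed K) (hKconvex : Convex ℝ K)
    (hKcone : ∀ c : ℝ, 0 ≤ c → ∀ x ∈ K, c • x ∈ K)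
    (hKint : (interior K).Nonempty)
    (μ : Measure (EuclideanSpace ℝ (Fin d))) [IsProbabilityMeasure μ]
    (Ω : Type) [MeasurableSpace Ω] (P : Measure Ω) [IsProbabilityMeasure P]
    (X : ℕ → Ω → EuclideanSpace ℝ (Fin d))
    (hXmeas : ∀ n, Measurable (X n))
    (hXindep : iIndepFun X P)
    (hXlaw : ∀ n, Measure.map (X n) P = μ) :
    (∀ x : EuclideanSpace ℝ (Fin d), ∀ z ∈ dualCone K, ∀ n : ℕ, 1 ≤ n →
      P {ω | ∀ k : ℕ, 1 ≤ k → k ≤ n → x + ∑ i ∈ Finset.range k, X i ω ∈ K}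
        ≤ laplace μ z ^ n * ENNReal.ofReal (Real.exp ⟪z, x⟫)) ∧
    (∀ x : EuclideanSpace ℝ (Fin d),
      limsup (fun n : ℕ =>
          P {ω | ∀ k : ℕ, 1 ≤ k → k ≤ n →
              x + ∑ i ∈ Finset.range k, X i ω ∈ K} ^ ((n : ℝ)⁻¹)) atTop
        ≤ ⨅ z ∈ dualCone K, laplace μ z) :=
  nonexit_upper_bound_dual_cone_general K μ Ω P X hXmeas hXindep hXlaw
end

section
/- Let C ⊆ ℝ^d be a closed convex cone and let μ be a probability measure on ℝ^d with L_μ(x) < ∞ for all x ∈ C. For every unit vector u ∈ C the following dichotomy holds: (1) if μ(u⁻) < 1, then lim_{t→∞} L_μ(x + tu) = ∞ for every x ∈ C; (2) if μ(u⁻) = 1, then lim_{t→∞} L_μ(x + tu) = ∫_{u^⊥} e^{⟨x,y⟩} dμ(y) for every x ∈ C, where u^⊥ = {y ∈ ℝ^d : ⟨u,y⟩ = 0}. -/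
/-!
Write `L_μ(x + tu) = ∫ e^{⟨x,y⟩ + t⟨u,y⟩} dμ(y)`. As `t → ∞` the integrand tends to `∞` where
`⟨u,y⟩ > 0`, to `e^{⟨x,y⟩}` on `u^⊥` and to `0` where `⟨u,y⟩ < 0`. If `μ(u⁻) < 1` the first set
has positive mass and Fatou's lemma forces the integrals to `∞`. If `μ(u⁻) = 1`, then for `t ≥ 0`
the integrand is a.e. dominated by `e^{⟨x,y⟩}`, integrable since `L_μ(x) < ∞`, and dominated
convergence gives the limit.
-/

open MeasureTheory ProbabilityTheory Filter
open scoped ENNReal RealInnerProductSpace Topology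

section ExpTilt

variable {α : Type*} [MeasurableSpace α] {μ : Measure α} {f g : α → ℝ}

lemma tendsto_ofReal_exp_add_mul_atTop_of_pos (b : ℝ) {a : ℝ} (ha : 0 < a) :
    Tendsto (fun t : ℝ => ENNReal.ofReal (Real.exp (b + t * a))) atTop (𝓝 ⊤) :=
  ENNReal.tendsto_ofReal_atTop.comp <| Real.tendsto_exp_atTop.comp <|
    tendsto_atTop_add_const_left _ b (tendsto_id.atTop_mul_const ha)

lemma tendsto_ofReal_exp_add_mul_atTop_of_nonpos (b : ℝ) {a : ℝ} (ha : a ≤ 0) :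
    Tendsto (fun t : ℝ => ENNReal.ofReal (Real.exp (b + t * a))) atTop
      (𝓝 (if a = 0 then ENNReal.ofReal (Real.exp b) else 0)) := by
  rcases ha.lt_or_eq with ha | rfl
  · rw [if_neg ha.ne, ← ENNReal.ofReal_zero]
    exact ENNReal.tendsto_ofReal <| Real.tendsto_exp_atBot.comp <|
      tendsto_atBot_add_const_left _ b (tendsto_id.atTop_mul_const_of_neg ha)
  · simp

lemma tendsto_lintegral_exp_add_mul_atTop_top (hf : Measurable f) (hg : Measurable g)
    (hpos : μ {y | 0 < g y} ≠ 0) :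
    Tendsto (fun t : ℝ => ∫⁻ y, ENNReal.ofReal (Real.exp (f y + t * g y)) ∂μ) atTop (𝓝 ⊤) := by
  have hliminf : ⊤ ≤ liminf
      (fun t : ℝ => ∫⁻ y, ENNReal.ofReal (Real.exp (f y + t * g y)) ∂μ) atTop :=
    calc ⊤ = ∫⁻ y, {y | 0 < g y}.indicator (fun _ => ⊤) y ∂μ := by
          rw [lintegral_indicator_const (measurableSet_lt measurable_const hg),
            ENNReal.top_mul hpos]
      _ ≤ ∫⁻ y, liminf (fun t : ℝ => ENNReal.ofReal (Real.exp (f y + t * g y))) atTop ∂μ := by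
          refine lintegral_mono fun y => ?_
          by_cases hy : 0 < g y
          · simp [hy, (tendsto_ofReal_exp_add_mul_atTop_of_pos _ hy).liminf_eq]
          · simp [hy]
      _ ≤ _ := lintegral_liminf_le (by fun_prop)
  rw [ENNReal.tendsto_nhds_top_iff_nnreal]
  exact fun M => eventually_lt_of_lt_liminf (ENNReal.coe_lt_top.trans_le hliminf)

lemma tendsto_lintegral_exp_add_mul_atTop_of_ae_nonpos (hf : Measurable f) (hg : Measurable g)
    (hg_nonpos : ∀ᵐ y ∂μ, g y ≤ 0) (hfin : ∫⁻ y, ENNReal.ofReal (Real.exp (f y)) ∂μ ≠ ⊤) :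
    Tendsto (fun t : ℝ => ∫⁻ y, ENNReal.ofReal (Real.exp (f y + t * g y)) ∂μ) atTop
      (𝓝 (∫⁻ y in {y | g y = 0}, ENNReal.ofReal (Real.exp (f y)) ∂μ)) := by
  rw [← lintegral_indicator (measurableSet_eq_fun hg measurable_const)]
  refine tendsto_lintegral_filter_of_dominated_convergence _ (.of_forall fun t => by fun_prop)
    ?_ hfin ?_
  · filter_upwards [eventually_ge_atTop 0] with t ht
    filter_upwards [hg_nonpos] with y hy
    exact ENNReal.ofReal_le_ofReal <| Real.exp_le_exp.2 <| by nlinarith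
  · filter_upwards [hg_nonpos] with y hy
    simpa only [Set.indicator_apply, Set.mem_ofPred_eq]
      using tendsto_ofReal_exp_add_mul_atTop_of_nonpos (f y) hy

end ExpTilt

lemma laplace_add_smul {d : ℕ} (μ : Measure (EuclideanSpace ℝ (Fin d)))
    (x u : EuclideanSpace ℝ (Fin d)) (t : ℝ) :
    laplace μ (x + t • u) = ∫⁻ y, ENNReal.ofReal (Real.exp (⟪x, y⟫ + t * ⟪u, y⟫)) ∂μ := by
  simp only [laplace, inner_add_left, real_inner_smul_left]

theorem laplace_at_infinity_dichotomy_general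
    {d : ℕ}
    (C : Set (EuclideanSpace ℝ (Fin d)))
    (μ : Measure (EuclideanSpace ℝ (Fin d))) [IsProbabilityMeasure μ]
    (hfin : ∀ x ∈ C, laplace μ x < ⊤)
    (u : EuclideanSpace ℝ (Fin d))
    (x : EuclideanSpace ℝ (Fin d)) (hx : x ∈ C) :
    (μ {y | ⟪u, y⟫ ≤ 0} < 1 →
      Tendsto (fun t : ℝ => laplace μ (x + t • u)) atTop (𝓝 ⊤)) ∧
    (μ {y | ⟪u, y⟫ ≤ 0} = 1 →
      Tendsto (fun t : ℝ => laplace μ (x + t • u)) atTop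
        (𝓝 (∫⁻ y in {y | ⟪u, y⟫ = 0}, ENNReal.ofReal (Real.exp ⟪x, y⟫) ∂μ))) := by
  have hxy : Measurable fun y : EuclideanSpace ℝ (Fin d) => ⟪x, y⟫ :=
    (continuous_const.inner continuous_id).measurable
  have huy : Measurable fun y : EuclideanSpace ℝ (Fin d) => ⟪u, y⟫ :=
    (continuous_const.inner continuous_id).measurable
  have hneg : MeasurableSet {y | ⟪u, y⟫ ≤ 0} := measurableSet_le huy measurable_const
  simp only [laplace_add_smul]
  refine ⟨fun hlt => tendsto_lintegral_exp_add_mul_atTop_top hxy huy ?_,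
    fun hone => tendsto_lintegral_exp_add_mul_atTop_of_ae_nonpos hxy huy ?_ (hfin x hx).ne⟩
  · simpa only [Set.compl_ofPred, not_le] using (prob_compl_eq_zero_iff hneg).not.2 hlt.ne
  · exact (ae_iff_measure_eq hneg.nullMeasurableSet).2 (hone.trans measure_univ.symm)

/-- **Lemma (behavior at infinity of the Laplace transform)**: let `C` be a closed convex cone
and suppose `L_μ` is finite on `C`. For every unit vector `u ∈ C`:
(1) if `μ(u⁻) < 1` then `L_μ(x + tu) → ∞` as `t → ∞`, for every `x ∈ C`;
(2) if `μ(u⁻) = 1` then `L_μ(x + tu) → ∫_{u^⊥} e^{⟨x,y⟩} dμ(y)` as `t → ∞`, for every `x ∈ C`. -/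
theorem laplace_at_infinity_dichotomy
    {d : ℕ} (hd : 1 ≤ d)
    (C : Set (EuclideanSpace ℝ (Fin d)))
    (hCclosed : IsClosed C) (hCconvex : Convex ℝ C)
    (hCcone : ∀ c : ℝ, 0 ≤ c → ∀ x ∈ C, c • x ∈ C)
    (hCne : C.Nonempty)
    (μ : Measure (EuclideanSpace ℝ (Fin d))) [IsProbabilityMeasure μ]
    (hfin : ∀ x ∈ C, laplace μ x < ⊤)
    (u : EuclideanSpace ℝ (Fin d)) (huC : u ∈ C) (hunorm : ‖u‖ = 1)
    (x : EuclideanSpace ℝ (Fin d)) (hx : x ∈ C) :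
    (μ {y | ⟪u, y⟫ ≤ 0} < 1 →
      Tendsto (fun t : ℝ => laplace μ (x + t • u)) atTop (𝓝 ⊤)) ∧
    (μ {y | ⟪u, y⟫ ≤ 0} = 1 →
      Tendsto (fun t : ℝ => laplace μ (x + t • u)) atTop
        (𝓝 (∫⁻ y in {y | ⟪u, y⟫ = 0}, ENNReal.ofReal (Real.exp ⟪x, y⟫) ∂μ))) :=
  laplace_at_infinity_dichotomy_general C μ hfin u x hx
end

section
/- Let C ⊆ ℝ^d be a closed convex cone and let μ be a probability measure on ℝ^d satisfying (H1) and with L_μ(x) < ∞ for all x ∈ C. Then L_μ attains a global minimum on C if and only if there is no u ∈ C \ {0} with μ(u⁻) = 1. -/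
/-!
If `μ(u⁻) = 1` for some `u ∈ C \ {0}`, then `n ↦ L_μ(x + n u)` decreases, by monotone convergence,
to the integral of `exp ⟪x, ·⟫` over the hyperplane `u^⊥`, which (H1) makes strictly smaller than
`L_μ(x)`; so no `x ∈ C` is a minimiser. Conversely, if every `v ∈ C \ {0}` charges the open
half-space `{⟪v, ·⟫ > 0}`, then `L_μ(r w) ≥ δ e^{rc}` for all `w` near `v`; compactness of the unit
sphere of `C` makes `L_μ` coercive on `C`, and `L_μ` is lower semicontinuous by Fatou's lemma, so
it attains its minimum on a compact ball of `C`.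
-/

open MeasureTheory ProbabilityTheory Filter
open scoped ENNReal RealInnerProductSpace Topology

theorem Convex.add_mem_of_forall_smul_mem {V : Type*} [AddCommGroup V] [Module ℝ V]
    {C : Set V} (hC : Convex ℝ C) (hcone : ∀ c : ℝ, 0 ≤ c → ∀ x ∈ C, c • x ∈ C)
    {a b : V} (ha : a ∈ C) (hb : b ∈ C) : a + b ∈ C := by
  have hmid : (1 / 2 : ℝ) • a + (1 / 2 : ℝ) • b ∈ C :=
    hC ha hb (by norm_num) (by norm_num) (by norm_num)
  convert hcone 2 zero_le_two _ hmid using 1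
  rw [smul_add, smul_smul, smul_smul]
  norm_num

section Laplace

variable {d : ℕ} {μ : Measure (EuclideanSpace ℝ (Fin d))}

local notation "E" => EuclideanSpace ℝ (Fin d)

theorem laplace_zero [IsProbabilityMeasure μ] : laplace μ 0 = 1 := by
  simp [laplace]

theorem lowerSemicontinuous_laplace : LowerSemicontinuous (laplace μ) := by
  refine lowerSemicontinuous_iff_le_liminf.2 fun x => ?_
  calc laplace μ x
      = ∫⁻ y, liminf (fun x' : E => ENNReal.ofReal (Real.exp ⟪x', y⟫)) (𝓝 x) ∂μ := by
        refine lintegral_congr fun y => ?_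
        have hcont : Continuous fun x' : E => ENNReal.ofReal (Real.exp ⟪x', y⟫) :=
          ENNReal.continuous_ofReal.comp (by fun_prop)
        exact (hcont.tendsto x).liminf_eq.symm
    _ ≤ liminf (laplace μ) (𝓝 x) := lintegral_liminf_le fun x' => by fun_prop

theorem ofReal_exp_mul_measure_le_laplace (x : E) (t : ℝ) :
    ENNReal.ofReal (Real.exp t) * μ {y | t ≤ ⟪x, y⟫} ≤ laplace μ x := by
  set g := fun y : E => ENNReal.ofReal (Real.exp ⟪x, y⟫)
  calc ENNReal.ofReal (Real.exp t) * μ {y | t ≤ ⟪x, y⟫}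
      ≤ ENNReal.ofReal (Real.exp t) * μ {y | ENNReal.ofReal (Real.exp t) ≤ g y} :=
        mul_le_mul_right
          (measure_mono fun y hy => ENNReal.ofReal_le_ofReal (Real.exp_le_exp.2 hy)) _
    _ ≤ laplace μ x := mul_meas_ge_le_lintegral₀ (by fun_prop) _

theorem tendsto_laplace_add_smul {x u : E} (hu : ∀ᵐ y ∂μ, ⟪u, y⟫ ≤ 0) (hx : laplace μ x ≠ ∞) :
    Tendsto (fun n : ℕ => laplace μ (x + (n : ℝ) • u)) atTop
      (𝓝 (∫⁻ y in {y | ⟪u, y⟫ = 0}, ENNReal.ofReal (Real.exp ⟪x, y⟫) ∂μ)) := by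
  have hinner : ∀ (n : ℕ) y, ⟪x + (n : ℝ) • u, y⟫ = ⟪x, y⟫ + n * ⟪u, y⟫ := fun n y => by
    rw [inner_add_left, real_inner_smul_left]
  rw [← lintegral_indicator (measurableSet_eq_fun (by fun_prop) measurable_const)]
  refine lintegral_tendsto_of_tendsto_of_antitone (fun n => by fun_prop) ?_
    (by simpa [laplace] using hx) ?_
  · filter_upwards [hu] with y hy m n hmn
    simp only [hinner]
    exact ENNReal.ofReal_le_ofReal <| Real.exp_le_exp.2 <|
      add_le_add_right (mul_le_mul_of_nonpos_right (Nat.cast_le.2 hmn) hy) _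
  · filter_upwards [hu] with y hy
    simp only [hinner]
    rcases hy.eq_or_lt with hy0 | hneg
    · simp [hy0]
    · have hlim : Tendsto (fun n : ℕ => ⟪x, y⟫ + n * ⟪u, y⟫) atTop atBot :=
        tendsto_atBot_add_const_left _ _
          (tendsto_natCast_atTop_atTop.atTop_mul_const_of_neg hneg)
      simpa [Set.indicator_of_notMem, hneg.ne, Function.comp_def] using
        (ENNReal.continuous_ofReal.tendsto 0).comp (Real.tendsto_exp_atBot.comp hlim)

theorem setLIntegral_lt_laplace {x : E} (S : Set E) (hS : MeasurableSet S) (hSc : μ Sᶜ ≠ 0)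
    (hx : laplace μ x ≠ ∞) :
    ∫⁻ y in S, ENNReal.ofReal (Real.exp ⟪x, y⟫) ∂μ < laplace μ x := by
  have hpos : 0 < ∫⁻ y in Sᶜ, ENNReal.ofReal (Real.exp ⟪x, y⟫) ∂μ := by
    rw [lintegral_pos_iff_support (by fun_prop)]
    simpa [Function.support, Real.exp_pos] using pos_iff_ne_zero.2 hSc
  have hsplit := lintegral_add_compl (μ := μ) (fun y => ENNReal.ofReal (Real.exp ⟪x, y⟫)) hS
  rw [laplace, ← hsplit] at hx ⊢
  exact ENNReal.lt_add_right (ENNReal.add_ne_top.1 hx).1 hpos.ne'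

theorem exists_laplace_add_smul_lt {x u : E} (hu : ∀ᵐ y ∂μ, ⟪u, y⟫ ≤ 0)
    (hu' : μ {y | ⟪u, y⟫ = 0}ᶜ ≠ 0) (hx : laplace μ x ≠ ∞) :
    ∃ n : ℕ, laplace μ (x + (n : ℝ) • u) < laplace μ x :=
  ((tendsto_laplace_add_smul hu hx).eventually (gt_mem_nhds <|
    setLIntegral_lt_laplace _ (measurableSet_eq_fun (by fun_prop) measurable_const) hu' hx)).exists

theorem exists_measure_inner_ge_inter_closedBall_ne_zero {v : E}
    (hv : μ {y | 0 < ⟪v, y⟫} ≠ 0) :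
    ∃ c > 0, ∃ R, μ ({y | c ≤ ⟪v, y⟫} ∩ Metric.closedBall 0 R) ≠ 0 := by
  by_contra! h
  refine hv (measure_mono_null (t := ⋃ n : ℕ,
    {y | ((n : ℝ) + 1)⁻¹ ≤ ⟪v, y⟫} ∩ Metric.closedBall 0 ((n : ℝ) + 1)) ?_
    (measure_iUnion_null fun n => h _ (by positivity) _))
  intro y (hy : 0 < ⟪v, y⟫)
  obtain ⟨n, hn⟩ := exists_nat_gt (max (⟪v, y⟫)⁻¹ ‖y‖)
  refine Set.mem_iUnion.2 ⟨n, ?_, ?_⟩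
  · exact inv_le_of_inv_le₀ hy ((le_max_left _ _).trans (hn.le.trans (by linarith)))
  · exact mem_closedBall_zero_iff.2 ((le_max_right _ _).trans (hn.le.trans (by linarith)))

theorem eventually_lt_laplace_smul {v : E} (hv : μ {y | 0 < ⟪v, y⟫} ≠ 0) {M : ℝ≥0∞}
    (hM : M ≠ ∞) : ∀ᶠ p : ℝ × E in atTop ×ˢ 𝓝 v, M < laplace μ (p.1 • p.2) := by
  obtain ⟨c, hc, R, hB⟩ := exists_measure_inner_ge_inter_closedBall_ne_zero hv
  set B := {y | c ≤ ⟪v, y⟫} ∩ Metric.closedBall 0 R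
  have hnear : ∀ᶠ w in 𝓝 v, B ⊆ {y | c / 2 ≤ ⟪w, y⟫} := by
    have hlim : Tendsto (fun w => ‖v - w‖ * R) (𝓝 v) (𝓝 0) := by
      simpa using (by fun_prop : Continuous fun w : E => ‖v - w‖ * R).tendsto v
    filter_upwards [hlim.eventually (gt_mem_nhds (half_pos hc))] with w hw y ⟨hcy, hyR⟩
    have hy : ‖y‖ ≤ R := mem_closedBall_zero_iff.1 hyR
    have hvw : ⟪v - w, y⟫ ≤ ‖v - w‖ * R :=
      (real_inner_le_norm _ _).trans (mul_le_mul_of_nonneg_left hy (norm_nonneg _))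
    rw [inner_sub_left] at hvw
    change c ≤ ⟪v, y⟫ at hcy
    change c / 2 ≤ ⟪w, y⟫
    linarith
  have hgrow : Tendsto (fun r : ℝ => ENNReal.ofReal (Real.exp (r * (c / 2))) * μ B) atTop
      (𝓝 ∞) := by
    simpa [ENNReal.top_mul hB] using ENNReal.Tendsto.mul_const (b := μ B)
      (ENNReal.tendsto_ofReal_atTop.comp (Real.tendsto_exp_atTop.comp
        (tendsto_id.atTop_mul_const (half_pos hc)))) (Or.inl ENNReal.top_ne_zero)
  filter_upwards [((hgrow.eventually (lt_mem_nhds hM.lt_top)).and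
    (eventually_ge_atTop 0)).prod_mk hnear] with ⟨r, w⟩ ⟨⟨hMr, hr⟩, hw⟩
  calc M < ENNReal.ofReal (Real.exp (r * (c / 2))) * μ B := hMr
    _ ≤ ENNReal.ofReal (Real.exp (r * (c / 2))) * μ {y | r * (c / 2) ≤ ⟪r • w, y⟫} := by
        refine mul_le_mul_right (measure_mono fun y hy => ?_) _
        show r * (c / 2) ≤ ⟪r • w, y⟫
        rw [real_inner_smul_left]
        exact mul_le_mul_of_nonneg_left (hw hy) hr
    _ ≤ laplace μ (r • w) := ofReal_exp_mul_measure_le_laplace _ _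

theorem exists_lt_laplace_of_le_norm {C : Set E} (hC : IsClosed C)
    (hcone : ∀ c : ℝ, 0 ≤ c → ∀ x ∈ C, c • x ∈ C)
    (hno : ∀ v ∈ C, v ≠ 0 → μ {y | 0 < ⟪v, y⟫} ≠ 0) {M : ℝ≥0∞} (hM : M ≠ ∞) :
    ∃ R > 0, ∀ x ∈ C, R ≤ ‖x‖ → M < laplace μ x := by
  set K := C ∩ Metric.sphere (0 : E) 1
  have hK : IsCompact K := (isCompact_sphere 0 1).inter_left hC
  have hev : ∀ᶠ p : ℝ × E in atTop ×ˢ 𝓝ˢ K, M < laplace μ (p.1 • p.2) :=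
    hK.mem_prod_nhdsSet_of_forall fun v hv => eventually_lt_laplace_smul
      (hno v hv.1 (ne_zero_of_mem_unit_sphere ⟨v, hv.2⟩)) hM
  obtain ⟨R, hR⟩ := eventually_atTop.1
    ((hev.curry.mono fun _ h => h.self_of_nhdsSet).and (eventually_gt_atTop 0))
  refine ⟨R, (hR R le_rfl).2, fun x hx hRx => ?_⟩
  have hx0 : 0 < ‖x‖ := (hR R le_rfl).2.trans_le hRx
  have hxK : ‖x‖⁻¹ • x ∈ K := ⟨hcone _ (by positivity) x hx, by simp [norm_smul, hx0.ne']⟩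
  simpa [smul_smul, hx0.ne'] using (hR _ hRx).1 _ hxK

theorem exists_forall_laplace_le [IsProbabilityMeasure μ] {C : Set E} (hC : IsClosed C)
    (hcone : ∀ c : ℝ, 0 ≤ c → ∀ x ∈ C, c • x ∈ C) (h0 : 0 ∈ C)
    (hno : ∀ v ∈ C, v ≠ 0 → μ {y | 0 < ⟪v, y⟫} ≠ 0) :
    ∃ x₀ ∈ C, ∀ x ∈ C, laplace μ x₀ ≤ laplace μ x := by
  obtain ⟨R, hR, hlt⟩ := exists_lt_laplace_of_le_norm hC hcone hno ENNReal.one_ne_top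
  have h0K : (0 : E) ∈ C ∩ Metric.closedBall 0 R := ⟨h0, Metric.mem_closedBall_self hR.le⟩
  obtain ⟨x₀, hx₀, hmin⟩ := LowerSemicontinuousOn.exists_isMinOn ⟨0, h0K⟩
    ((isCompact_closedBall 0 R).inter_left hC) (lowerSemicontinuous_laplace.lowerSemicontinuousOn _)
  refine ⟨x₀, hx₀.1, fun x hx => ?_⟩
  by_cases hxR : ‖x‖ ≤ R
  · exact hmin ⟨hx, mem_closedBall_zero_iff.2 hxR⟩
  · calc laplace μ x₀ ≤ laplace μ 0 := hmin h0K
      _ = 1 := laplace_zero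
      _ ≤ laplace μ x := (hlt x hx (le_of_not_ge hxR)).le

end Laplace

theorem laplace_attains_min_iff_no_halfspace_general
    {d : ℕ}
    (C : Set (EuclideanSpace ℝ (Fin d)))
    (hCclosed : IsClosed C) (hCconvex : Convex ℝ C)
    (hCcone : ∀ c : ℝ, 0 ≤ c → ∀ x ∈ C, c • x ∈ C)
    (hCne : C.Nonempty)
    (μ : Measure (EuclideanSpace ℝ (Fin d))) [IsProbabilityMeasure μ]
    -- (H1)
    (hH1 : ∀ u : EuclideanSpace ℝ (Fin d), u ≠ 0 → μ {y | ⟪u, y⟫ = 0} < 1) :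
    (∃ x₀ ∈ C, ∀ x ∈ C, laplace μ x₀ ≤ laplace μ x) ↔
      ¬ ∃ u ∈ C, u ≠ 0 ∧ μ {y | ⟪u, y⟫ ≤ 0} = 1 := by
  obtain ⟨z, hz⟩ := hCne
  have h0C : 0 ∈ C := by simpa using hCcone 0 le_rfl z hz
  constructor
  · rintro ⟨x₀, hx₀C, hmin⟩ ⟨u, huC, hu0, hμu⟩
    have hu : ∀ᵐ y ∂μ, ⟪u, y⟫ ≤ 0 :=
      (ae_iff_measure_eq (measurableSet_le (by fun_prop) measurable_const).nullMeasurableSet).2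
        (by rw [hμu, measure_univ])
    have hu' : μ {y | ⟪u, y⟫ = 0}ᶜ ≠ 0 := by
      rw [prob_compl_eq_one_sub (measurableSet_eq_fun (by fun_prop) measurable_const)]
      exact (tsub_pos_of_lt (hH1 u hu0)).ne'
    have hx₀ : laplace μ x₀ ≠ ∞ := ne_top_of_le_ne_top (by simp [laplace_zero]) (hmin 0 h0C)
    obtain ⟨n, hn⟩ := exists_laplace_add_smul_lt hu hu' hx₀
    exact (hmin _ (hCconvex.add_mem_of_forall_smul_mem hCcone hx₀C
      (hCcone _ n.cast_nonneg u huC))).not_gt hn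
  · intro hno
    refine exists_forall_laplace_le hCclosed hCcone h0C fun v hv hv0 hμ => hno ⟨v, hv, hv0, ?_⟩
    refine (prob_compl_eq_zero_iff (measurableSet_le (by fun_prop) measurable_const)).1 ?_
    simpa [Set.compl_ofPred] using hμ

/-- **Lemma (existence of a global minimum)**: if `μ` satisfies (H1) and has all `C`-exponential
moments, then `L_μ` attains a global minimum on the closed convex cone `C` if and only if there
is no `u ∈ C \ {0}` with `μ(u⁻) = 1`. -/
theorem laplace_attains_min_iff_no_halfspace
    {d : ℕ} (hd : 1 ≤ d)
    (C : Set (EuclideanSpace ℝ (Fin d)))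
    (hCclosed : IsClosed C) (hCconvex : Convex ℝ C)
    (hCcone : ∀ c : ℝ, 0 ≤ c → ∀ x ∈ C, c • x ∈ C)
    (hCne : C.Nonempty)
    (μ : Measure (EuclideanSpace ℝ (Fin d))) [IsProbabilityMeasure μ]
    -- (H1)
    (hH1 : ∀ u : EuclideanSpace ℝ (Fin d), u ≠ 0 → μ {y | ⟪u, y⟫ = 0} < 1)
    (hfin : ∀ x ∈ C, laplace μ x < ⊤) :
    (∃ x₀ ∈ C, ∀ x ∈ C, laplace μ x₀ ≤ laplace μ x) ↔
      ¬ ∃ u ∈ C, u ≠ 0 ∧ μ {y | ⟪u, y⟫ ≤ 0} = 1 :=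
  laplace_attains_min_iff_no_halfspace_general C hCclosed hCconvex hCcone hCne μ hH1
end

section
/- Let 0 < q ≤ 1/2 and p = 1 − 2q ≥ 0, and let (S_n)_{n≥0} be the random walk on ℤ² started at x with i.i.d. increments equal to (1,−1) with probability q, (−1,1) with probability q, and (−1,−1) with probability p. Let Q = {(i,j) ∈ ℤ² : i ≥ 0, j ≥ 0} and τ_Q := inf{n ≥ 1 : S_n ∉ Q}. Then for every N ≥ 1 and every starting point x ∈ D_{2N} := {(i,j) ∈ Q : i + j = 2N}, one has lim_{n→∞} (P^x[τ_Q > n])^{1/n} = 2q·cos(π/(2N+2)). -/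
open MeasureTheory ProbabilityTheory Filter
open scoped ENNReal Topology

/-!
Since the first step is independent of the remaining ones, the probability `u n y` of staying
in `Q` for `n` steps from `y` satisfies `u (n+1) y = ∑ₛ μ{s} 1_Q(y+s) u n (y+s)`. On the segment
`{i + j = L} ∩ Q` the two sideways steps act as `q` times the adjacency operator of a path on
`L + 1` vertices, whose Perron eigenvector `w i = sin ((i+1) π/(L+2))` has eigenvalue
`2 cos (π/(L+2))` and vanishes at the two exit points `i = -1, L+1`; hence
`u n ≥ λ_L^n w` with `λ_L = 2q cos (π/(L+2))`. The step `(-1,-1)` only leads to the segment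
`L - 2`, where by induction `u n = O(λ_{L-2}^n)` with `λ_{L-2} < λ_L`, so
`(α λ_L^n - β λ_{L-2}^n) w` is a supersolution and `u n = O(λ_L^n)`. Taking `n`-th roots gives
the rate `λ_L`.
-/

namespace ProbabilityTheory

lemma iIndepFun.indepFun_head_tail {Ω β : Type*} [MeasurableSpace Ω] [mβ : MeasurableSpace β]
    {P : Measure Ω} {X : ℕ → Ω → β} (hX : iIndepFun X P) (hXmeas : ∀ n, Measurable (X n)) :
    IndepFun (X 0) (fun ω i => X (i + 1) ω) P := by
  rw [IndepFun_iff_Indep]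
  have h := indep_iSup_of_disjoint (fun i => (hXmeas i).comap_le) hX.iIndep
    (S := {0}) (T := {0}ᶜ) disjoint_compl_right
  refine indep_of_indep_of_le h
    (le_iSup₂ (f := fun i (_ : i ∈ ({0} : Set ℕ)) => mβ.comap (X i)) 0 rfl) ?_
  simp_rw [MeasurableSpace.pi, MeasurableSpace.comap_iSup, MeasurableSpace.comap_comp,
    Function.comp_def]
  exact iSup_le fun i =>
    le_iSup₂ (f := fun i (_ : i ∈ ({0} : Set ℕ)ᶜ) => mβ.comap (X i)) (i + 1) i.succ_ne_zero

end ProbabilityTheory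

section StaysIn

variable {G : Type*} [AddCommMonoid G]

def StaysIn (A : Set G) : ℕ → G → (ℕ → G) → Prop
  | 0, _, _ => True
  | n + 1, y, t => y + t 0 ∈ A ∧ StaysIn A n (y + t 0) (fun i => t (i + 1))

lemma staysIn_iff {A : Set G} {n : ℕ} {y : G} {t : ℕ → G} :
    StaysIn A n y t ↔ ∀ k, 1 ≤ k → k ≤ n → y + ∑ i ∈ Finset.range k, t i ∈ A := by
  induction n generalizing y t with
  | zero => simp only [StaysIn, true_iff]; omega
  | succ n ih =>
    have hshift (k : ℕ) : y + ∑ i ∈ Finset.range (k + 1), t i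
        = y + t 0 + ∑ i ∈ Finset.range k, t (i + 1) := by
      rw [Finset.sum_range_succ', add_comm _ (t 0), add_assoc]
    rw [StaysIn, ih]
    constructor
    · rintro ⟨h0, h⟩ (_ | k) hk hkn
      · omega
      · rcases Nat.eq_zero_or_pos k with rfl | hk
        · simpa using h0
        · rw [hshift]; exact h k hk (by omega)
    · intro h
      refine ⟨by simpa using h 1 le_rfl (by omega), fun k hk hkn => ?_⟩
      rw [← hshift]
      exact h (k + 1) (by omega) (by omega)

variable [MeasurableSpace G] [Countable G] [MeasurableSingletonClass G]

omit [AddCommMonoid G] in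
lemma measurableSet_setOf_prod_of_countable {β : Type*} [MeasurableSpace β] {p : G → β → Prop}
    (hp : ∀ s, MeasurableSet {b | p s b}) : MeasurableSet {x : G × β | p x.1 x.2} :=
  measurableSet_setOfPred.mpr <| measurable_from_prod_countable_right fun s =>
    measurableSet_setOfPred.mp (hp s)

lemma measurableSet_staysIn (A : Set G) (n : ℕ) (y : G) :
    MeasurableSet {t : ℕ → G | StaysIn A n y t} := by
  induction n generalizing y with
  | zero => simp [StaysIn]
  | succ n ih =>
    have hS : MeasurableSet {p : G × (ℕ → G) | y + p.1 ∈ A ∧ StaysIn A n (y + p.1) p.2} :=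
      measurableSet_setOf_prod_of_countable
        (p := fun s t => y + s ∈ A ∧ StaysIn A n (y + s) t) fun s =>
        (MeasurableSet.const _).inter (ih (y + s))
    exact hS.preimage (f := fun t : ℕ → G => (t 0, fun i => t (i + 1))) (by fun_prop)

variable (μ : Measure G) (A : Set G)

noncomputable def stayProb : ℕ → G → ℝ≥0∞
  | 0, _ => 1
  | n + 1, y => ∫⁻ s, A.indicator (stayProb n) (y + s) ∂μ

theorem measure_staysIn_eq_stayProb {Ω : Type*} [MeasurableSpace Ω] {P : Measure Ω}
    [IsProbabilityMeasure P] {X : ℕ → Ω → G} (hXmeas : ∀ n, Measurable (X n))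
    (hXindep : iIndepFun X P) (hXlaw : ∀ n, P.map (X n) = μ) (n : ℕ) (y : G) :
    P {ω | StaysIn A n y (fun i => X i ω)} = stayProb μ A n y := by
  induction n generalizing X y with
  | zero => simp [StaysIn, stayProb]
  | succ n ih =>
    set T : Ω → ℕ → G := fun ω i => X (i + 1) ω
    have hT : Measurable T := by fun_prop
    have hTlaw : ∀ z, P.map T {u | StaysIn A n z u} = stayProb μ A n z := fun z => by
      rw [Measure.map_apply hT (measurableSet_staysIn A n z)]
      exact ih (fun i => hXmeas (i + 1)) (hXindep.precomp Nat.succ_injective)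
        (fun i => hXlaw (i + 1)) z
    have hS : MeasurableSet {p : G × (ℕ → G) | y + p.1 ∈ A ∧ StaysIn A n (y + p.1) p.2} :=
      measurableSet_setOf_prod_of_countable
        (p := fun s t => y + s ∈ A ∧ StaysIn A n (y + s) t) fun s =>
        (MeasurableSet.const _).inter (measurableSet_staysIn A n (y + s))
    calc P {ω | StaysIn A (n + 1) y (fun i => X i ω)}
        = P.map (fun ω => (X 0 ω, T ω))
            {p | y + p.1 ∈ A ∧ StaysIn A n (y + p.1) p.2} := by
          rw [Measure.map_apply ((hXmeas 0).prodMk hT) hS]; rfl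
      _ = (μ.prod (P.map T)) {p | y + p.1 ∈ A ∧ StaysIn A n (y + p.1) p.2} := by
          rw [(hXindep.indepFun_head_tail hXmeas).map_prod_eq_prod_map_map
            (hXmeas 0).aemeasurable hT.aemeasurable, hXlaw 0]
      _ = ∫⁻ s, A.indicator (stayProb μ A n) (y + s) ∂μ := by
          rw [Measure.prod_apply hS]
          refine lintegral_congr fun s => ?_
          by_cases hs : y + s ∈ A
          · simp [hs, Set.preimage, hTlaw]
          · simp [hs, Set.preimage]

end StaysIn

lemma tendsto_rpow_inv_of_le_of_le {u : ℕ → ℝ} {c C r : ℝ} (hc : 0 < c) (hr : 0 ≤ r)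
    (hlow : ∀ n, c * r ^ n ≤ u n) (hup : ∀ n, u n ≤ C * r ^ n) :
    Tendsto (fun n : ℕ => u n ^ (n : ℝ)⁻¹) atTop (𝓝 r) := by
  have hC : 0 < C := hc.trans_le (by simpa using (hlow 0).trans (hup 0))
  have hlim {a : ℝ} (ha : 0 < a) : Tendsto (fun n : ℕ => a ^ (n : ℝ)⁻¹ * r) atTop (𝓝 r) := by
    simpa using ((Real.continuousAt_const_rpow ha.ne').tendsto.comp
      (tendsto_inv_atTop_nhds_zero_nat (𝕜 := ℝ))).mul_const r
  have hroot {a : ℝ} (ha : 0 ≤ a) {n : ℕ} (hn : n ≠ 0) :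
      (a * r ^ n) ^ (n : ℝ)⁻¹ = a ^ (n : ℝ)⁻¹ * r := by
    rw [Real.mul_rpow ha (pow_nonneg hr n), Real.pow_rpow_inv_natCast hr hn]
  refine tendsto_of_tendsto_of_tendsto_of_le_of_le' (hlim hc) (hlim hC) ?_ ?_ <;>
    filter_upwards [eventually_ne_atTop 0] with n hn
  · rw [← hroot hc.le hn]
    exact Real.rpow_le_rpow (by positivity) (hlow n) (by positivity)
  · rw [← hroot hC.le hn]
    exact Real.rpow_le_rpow ((by positivity : 0 ≤ c * r ^ n).trans (hlow n)) (hup n) (by positivity)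

namespace HalfSpaceWalk

open Real

def quarterPlane : Set (ℤ × ℤ) := {z | 0 ≤ z.1 ∧ 0 ≤ z.2}

noncomputable def stepLaw (q : ℝ) : Measure (ℤ × ℤ) :=
  ENNReal.ofReal q • Measure.dirac (1, -1) + ENNReal.ofReal q • Measure.dirac (-1, 1)
    + ENNReal.ofReal (1 - 2 * q) • Measure.dirac (-1, -1)

noncomputable def survival (q : ℝ) : ℕ → ℤ × ℤ → ℝ
  | 0, _ => 1
  | n + 1, y => q * quarterPlane.indicator (survival q n) (y + (1, -1))
      + q * quarterPlane.indicator (survival q n) (y + (-1, 1))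
      + (1 - 2 * q) * quarterPlane.indicator (survival q n) (y + (-1, -1))

variable {q : ℝ}

lemma survival_nonneg (hq0 : 0 ≤ q) (hq : q ≤ 1 / 2) (n : ℕ) (y : ℤ × ℤ) :
    0 ≤ survival q n y := by
  induction n generalizing y with
  | zero => simp [survival]
  | succ n ih =>
    have hind (z : ℤ × ℤ) : 0 ≤ quarterPlane.indicator (survival q n) z :=
      Set.indicator_nonneg (fun z _ => ih z) z
    have hp : 0 ≤ 1 - 2 * q := by linarith
    rw [survival]
    exact add_nonneg (add_nonneg (mul_nonneg hq0 (hind _)) (mul_nonneg hq0 (hind _)))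
      (mul_nonneg hp (hind _))

lemma stayProb_stepLaw (hq0 : 0 ≤ q) (hq : q ≤ 1 / 2) (n : ℕ) (y : ℤ × ℤ) :
    stayProb (stepLaw q) quarterPlane n y = ENNReal.ofReal (survival q n y) := by
  induction n generalizing y with
  | zero => simp [stayProb, survival]
  | succ n ih =>
    have hind (z : ℤ × ℤ) : quarterPlane.indicator (stayProb (stepLaw q) quarterPlane n) z
        = ENNReal.ofReal (quarterPlane.indicator (survival q n) z) := by
      by_cases hz : z ∈ quarterPlane <;> simp [hz, ih]
    have hnn (z : ℤ × ℤ) : 0 ≤ quarterPlane.indicator (survival q n) z :=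
      Set.indicator_nonneg (fun z _ => survival_nonneg hq0 hq n z) z
    have hp : 0 ≤ 1 - 2 * q := by linarith
    simp only [stayProb, hind]
    simp only [stepLaw, lintegral_add_measure, lintegral_smul_measure, lintegral_dirac, survival,
      smul_eq_mul]
    rw [ENNReal.ofReal_add (add_nonneg (mul_nonneg hq0 (hnn _)) (mul_nonneg hq0 (hnn _)))
        (mul_nonneg hp (hnn _)),
      ENNReal.ofReal_add (mul_nonneg hq0 (hnn _)) (mul_nonneg hq0 (hnn _)),
      ENNReal.ofReal_mul hq0, ENNReal.ofReal_mul hq0, ENNReal.ofReal_mul hp]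

noncomputable def angle (L : ℕ) : ℝ := π / (L + 2)

noncomputable def rate (q : ℝ) (L : ℕ) : ℝ := 2 * q * cos (angle L)

noncomputable def sineVec (L : ℕ) (i : ℤ) : ℝ := sin ((i + 1) * angle L)

lemma angle_pos (L : ℕ) : 0 < angle L := by unfold angle; positivity

lemma add_two_mul_angle (L : ℕ) : ((L : ℝ) + 2) * angle L = π := by
  unfold angle; field_simp

lemma angle_le_pi_div_two (L : ℕ) : angle L ≤ π / 2 :=
  div_le_div_of_nonneg_left pi_pos.le two_pos (by linarith [(L.cast_nonneg : (0 : ℝ) ≤ L)])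

lemma rate_zero : rate q 0 = 0 := by simp [rate, angle]

lemma strictMono_rate (hq0 : 0 < q) : StrictMono (rate q) := by
  intro L L' hLL'
  have hcos : cos (angle L) < cos (angle L') := by
    refine cos_lt_cos_of_nonneg_of_le_pi (angle_pos L').le
      ((angle_le_pi_div_two L).trans (by linarith [pi_pos])) ?_
    exact div_lt_div_of_pos_left pi_pos (by positivity) (by exact_mod_cast by omega)
  unfold rate
  gcongr

lemma rate_nonneg (hq0 : 0 < q) (L : ℕ) : 0 ≤ rate q L :=
  rate_zero (q := q) ▸ (strictMono_rate hq0).monotone L.zero_le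

lemma sineVec_succ_add_sineVec_pred (L : ℕ) (i : ℤ) :
    sineVec L (i + 1) + sineVec L (i - 1) = 2 * cos (angle L) * sineVec L i := by
  have hsucc : ((i + 1 : ℤ) + 1 : ℝ) * angle L = (i + 1) * angle L + angle L := by push_cast; ring
  have hpred : ((i - 1 : ℤ) + 1 : ℝ) * angle L = (i + 1) * angle L - angle L := by push_cast; ring
  rw [sineVec, sineVec, sineVec, hsucc, hpred, sin_add, sin_sub]
  ring

lemma sineVec_neg_one (L : ℕ) : sineVec L (-1) = 0 := by simp [sineVec]

lemma sineVec_add_one (L : ℕ) : sineVec L (L + 1) = 0 := by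
  rw [sineVec, ← sin_pi]
  push_cast
  rw [← add_two_mul_angle L]
  ring_nf

lemma sineVec_nonneg (L : ℕ) {i : ℤ} (h0 : -1 ≤ i) (hL : i ≤ L + 1) : 0 ≤ sineVec L i := by
  have h0' : (-1 : ℝ) ≤ i := by exact_mod_cast h0
  have hL' : (i : ℝ) ≤ L + 1 := by exact_mod_cast hL
  have := angle_pos L
  refine sin_nonneg_of_nonneg_of_le_pi (by nlinarith) ?_
  rw [← add_two_mul_angle L]
  nlinarith

lemma sin_angle_le_sineVec (L : ℕ) {i : ℤ} (h0 : 0 ≤ i) (hL : i ≤ L) :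
    sin (angle L) ≤ sineVec L i := by
  have h0' : (0 : ℝ) ≤ i := by exact_mod_cast h0
  have hL' : (i : ℝ) ≤ L := by exact_mod_cast hL
  have := angle_pos L
  have hπ := add_two_mul_angle L
  rcases le_or_gt (((i : ℝ) + 1) * angle L) (π / 2) with h | h
  · exact strictMonoOn_sin.monotoneOn ⟨by linarith [angle_le_pi_div_two L], angle_le_pi_div_two L⟩
      ⟨by nlinarith, h⟩ (by nlinarith)
  · rw [sineVec, ← sin_pi_sub ((i + 1) * angle L)]
    exact strictMonoOn_sin.monotoneOn (b := π - (i + 1) * angle L)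
      ⟨by linarith [angle_le_pi_div_two L], angle_le_pi_div_two L⟩ ⟨by nlinarith, by linarith⟩
      (by nlinarith)

lemma sin_angle_pos (L : ℕ) : 0 < sin (angle L) :=
  sin_pos_of_pos_of_lt_pi (angle_pos L) ((angle_le_pi_div_two L).trans_lt (by linarith [pi_pos]))

lemma sineVec_eq_zero_of_notMem {L : ℕ} {z : ℤ × ℤ} (hz : z ∉ quarterPlane) (h1 : -1 ≤ z.1)
    (h2 : -1 ≤ z.2) (hzL : z.1 + z.2 = L) : sineVec L z.1 = 0 := by
  simp only [quarterPlane, Set.mem_ofPred_eq, not_and_or, not_le] at hz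
  rcases hz with hz | hz
  · rw [show z.1 = -1 by omega, sineVec_neg_one]
  · rw [show z.1 = L + 1 by omega, sineVec_add_one]

lemma rate_pow_mul_sineVec_le_survival (hq0 : 0 ≤ q) (hq : q ≤ 1 / 2) (L n : ℕ) {y : ℤ × ℤ}
    (hy : y ∈ quarterPlane) (hyL : y.1 + y.2 = L) :
    rate q L ^ n * sineVec L y.1 ≤ survival q n y := by
  induction n generalizing y with
  | zero => simpa [survival, sineVec] using sin_le_one _
  | succ n ih =>
    have hneighbour (z : ℤ × ℤ) (h1 : -1 ≤ z.1) (h2 : -1 ≤ z.2) (hzL : z.1 + z.2 = L) :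
        rate q L ^ n * sineVec L z.1 ≤ quarterPlane.indicator (survival q n) z :=
      Set.le_indicator_apply (fun hz => ih hz hzL)
        (fun hz => by rw [sineVec_eq_zero_of_notMem hz h1 h2 hzL, mul_zero])
    obtain ⟨hy1, hy2⟩ := hy
    have hA := hneighbour (y + (1, -1)) (by simp; omega) (by simp; omega) (by simp; omega)
    have hB := hneighbour (y + (-1, 1)) (by simp; omega) (by simp; omega) (by simp; omega)
    have hC : 0 ≤ (1 - 2 * q) * quarterPlane.indicator (survival q n) (y + (-1, -1)) :=
      mul_nonneg (by linarith) (Set.indicator_nonneg (fun z _ => survival_nonneg hq0 hq n z) _)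
    simp only [Prod.fst_add] at hA hB
    rw [← sub_eq_add_neg] at hB
    calc rate q L ^ (n + 1) * sineVec L y.1
        = q * (rate q L ^ n * sineVec L (y.1 + 1)) + q * (rate q L ^ n * sineVec L (y.1 - 1)) := by
          simp only [pow_succ, rate]
          linear_combination (-(q * (2 * q * cos (angle L)) ^ n)) *
            sineVec_succ_add_sineVec_pred L y.1
      _ ≤ survival q (n + 1) y := by
          rw [survival]
          linarith [mul_le_mul_of_nonneg_left hA hq0, mul_le_mul_of_nonneg_left hB hq0]

lemma survival_le_of_supersolution (hq0 : 0 ≤ q) (hq : q ≤ 1 / 2) {L : ℕ} {C' r' α β : ℝ}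
    (hC' : 0 ≤ C') (hr' : 0 ≤ r') (hcoef : ∀ n, 0 ≤ α * rate q L ^ n - β * r' ^ n)
    (hinit : 1 ≤ (α - β) * sin (angle L))
    (hfeed : (1 - 2 * q) * C' ≤ β * (rate q L - r') * sin (angle L))
    (hbelow : ∀ n {z : ℤ × ℤ}, z ∈ quarterPlane → z.1 + z.2 + 2 = L → survival q n z ≤ C' * r' ^ n)
    (n : ℕ) {y : ℤ × ℤ} (hy : y ∈ quarterPlane) (hyL : y.1 + y.2 = L) :
    survival q n y ≤ (α * rate q L ^ n - β * r' ^ n) * sineVec L y.1 := by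
  set r := rate q L
  have hm_le {z : ℤ × ℤ} (hz : z ∈ quarterPlane) (hzL : z.1 + z.2 = L) :
      sin (angle L) ≤ sineVec L z.1 :=
    sin_angle_le_sineVec L hz.1 (by linarith [hz.2])
  induction n generalizing y with
  | zero =>
    rw [survival]
    simpa using hinit.trans (mul_le_mul_of_nonneg_left (hm_le hy hyL) (by simpa using hcoef 0))
  | succ n ih =>
    have hneighbour (z : ℤ × ℤ) (h1 : -1 ≤ z.1) (h2 : -1 ≤ z.2) (hzL : z.1 + z.2 = L) :
        quarterPlane.indicator (survival q n) z ≤ (α * r ^ n - β * r' ^ n) * sineVec L z.1 :=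
      Set.indicator_apply_le' (fun hz => ih hz hzL)
        (fun _ => mul_nonneg (hcoef n) (sineVec_nonneg L h1 (by omega)))
    have hdown : quarterPlane.indicator (survival q n) (y + (-1, -1)) ≤ C' * r' ^ n :=
      Set.indicator_apply_le' (fun hz => hbelow n hz (by simp; omega)) (fun _ => by positivity)
    obtain ⟨hy1, hy2⟩ := hy
    have hA := hneighbour (y + (1, -1)) (by simp; omega) (by simp; omega) (by simp; omega)
    have hB := hneighbour (y + (-1, 1)) (by simp; omega) (by simp; omega) (by simp; omega)
    simp only [Prod.fst_add] at hA hB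
    rw [← sub_eq_add_neg] at hB
    have hp : 0 ≤ 1 - 2 * q := by linarith
    have hgap : 0 ≤ β * (r - r') := by
      nlinarith [sin_angle_pos L, mul_nonneg hp hC']
    have hfeed' : (1 - 2 * q) * C' * r' ^ n ≤ β * (r - r') * sineVec L y.1 * r' ^ n :=
      mul_le_mul_of_nonneg_right
        (hfeed.trans (mul_le_mul_of_nonneg_left (hm_le ⟨hy1, hy2⟩ hyL) hgap)) (pow_nonneg hr' n)
    calc survival q (n + 1) y
        ≤ q * ((α * r ^ n - β * r' ^ n) * sineVec L (y.1 + 1))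
          + q * ((α * r ^ n - β * r' ^ n) * sineVec L (y.1 - 1))
          + (1 - 2 * q) * (C' * r' ^ n) := by
          rw [survival]
          gcongr
      _ = (α * r ^ n - β * r' ^ n) * r * sineVec L y.1 + (1 - 2 * q) * C' * r' ^ n := by
          simp only [r, rate]
          linear_combination (q * (α * (2 * q * cos (angle L)) ^ n - β * r' ^ n)) *
            sineVec_succ_add_sineVec_pred L y.1
      _ ≤ (α * r ^ (n + 1) - β * r' ^ (n + 1)) * sineVec L y.1 := by
          linear_combination hfeed'

lemma survival_le_of_le_below (hq0 : 0 ≤ q) (hq : q ≤ 1 / 2) {L : ℕ} {C' r' : ℝ} (hC' : 0 ≤ C')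
    (hr' : 0 ≤ r') (hlt : r' < rate q L)
    (hbelow : ∀ n {z : ℤ × ℤ}, z ∈ quarterPlane → z.1 + z.2 + 2 = L →
      survival q n z ≤ C' * r' ^ n) :
    ∃ C, ∀ n {y : ℤ × ℤ}, y ∈ quarterPlane → y.1 + y.2 = L → survival q n y ≤ C * rate q L ^ n := by
  set r := rate q L
  set m := sin (angle L)
  have hm : 0 < m := sin_angle_pos L
  have hgap : 0 < r - r' := by linarith
  set β := (1 - 2 * q) * C' / (m * (r - r'))
  have hp : 0 ≤ 1 - 2 * q := by linarith
  have hβ : 0 ≤ β := by positivity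
  have hcoef (n : ℕ) : 0 ≤ (1 / m + β) * r ^ n - β * r' ^ n := by
    have hpow : 0 ≤ r ^ n - r' ^ n := sub_nonneg.mpr (pow_le_pow_left₀ hr' hlt.le n)
    have := hr'.trans hlt.le
    nlinarith [mul_nonneg hβ hpow, (by positivity : 0 ≤ 1 / m * r ^ n)]
  have hsuper := survival_le_of_supersolution hq0 hq hC' hr' hcoef
    (by rw [add_sub_cancel_right, one_div_mul_cancel hm.ne'])
    (le_of_eq (show (1 - 2 * q) * C' = β * (r - r') * m by simp only [β]; field_simp)) hbelow
  refine ⟨1 / m + β, fun n y hy hyL => (hsuper n hy hyL).trans ?_⟩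
  have hw : sineVec L y.1 ≤ 1 := sin_le_one _
  nlinarith [mul_le_mul_of_nonneg_left hw (hcoef n), mul_nonneg hβ (pow_nonneg hr' n)]

lemma survival_succ_origin (n : ℕ) : survival q (n + 1) (0, 0) = 0 := by
  simp [survival, quarterPlane]

lemma exists_survival_le_rate_pow (hq0 : 0 < q) (hq : q ≤ 1 / 2) (L : ℕ) :
    ∃ C, ∀ n {y : ℤ × ℤ}, y ∈ quarterPlane → y.1 + y.2 = L → survival q n y ≤ C * rate q L ^ n := by
  induction L using Nat.twoStepInduction with
  | zero =>
    refine ⟨1, fun n y hy hyL => ?_⟩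
    obtain rfl : y = (0, 0) := by
      obtain ⟨hy1, hy2⟩ := hy
      ext <;> simp <;> omega
    cases n with
    | zero => simp [survival]
    | succ n => simp [survival_succ_origin, rate_zero]
  | one =>
    refine survival_le_of_le_below hq0.le hq le_rfl le_rfl
      (rate_zero (q := q) ▸ strictMono_rate hq0 zero_lt_one) fun n z hz hzL => ?_
    have := hz.1; have := hz.2
    push_cast at hzL
    omega
  | more L ih _ =>
    obtain ⟨C', hC'⟩ := ih
    have hC'0 : 0 ≤ C' := by
      have := hC' 0 (y := (L, 0)) ⟨by positivity, le_rfl⟩ (by simp)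
      simp only [survival, pow_zero, mul_one] at this
      linarith
    refine survival_le_of_le_below hq0.le hq hC'0 (rate_nonneg hq0 L)
      (strictMono_rate hq0 (by omega)) fun n z hz hzL => hC' n hz ?_
    push_cast at hzL
    omega

theorem tendsto_survival_rpow_inv (hq0 : 0 < q) (hq : q ≤ 1 / 2) {L : ℕ} {x : ℤ × ℤ}
    (hx : x ∈ quarterPlane) (hxL : x.1 + x.2 = L) :
    Tendsto (fun n : ℕ => survival q n x ^ (n : ℝ)⁻¹) atTop (𝓝 (rate q L)) := by
  obtain ⟨C, hC⟩ := exists_survival_le_rate_pow hq0 hq L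
  have hc : 0 < sineVec L x.1 :=
    (sin_angle_pos L).trans_le (sin_angle_le_sineVec L hx.1 (by linarith [hx.2]))
  exact tendsto_rpow_inv_of_le_of_le hc (rate_nonneg hq0 L)
    (fun n => (mul_comm _ _).trans_le (rate_pow_mul_sineVec_le_survival hq0.le hq L n hx hxL))
    (fun n => hC n hx hxL)

end HalfSpaceWalk

open HalfSpaceWalk in
theorem exit_time_quarter_plane_halfspace_walk_general
    (q : ℝ) (hq0 : 0 < q) (hq : q ≤ 1 / 2)
    (μ : Measure (ℤ × ℤ))
    (hμ : μ = ENNReal.ofReal q • Measure.dirac (1, -1)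
        + ENNReal.ofReal q • Measure.dirac (-1, 1)
        + ENNReal.ofReal (1 - 2 * q) • Measure.dirac (-1, -1))
    (Ω : Type) [MeasurableSpace Ω] (P : Measure Ω) [IsProbabilityMeasure P]
    (X : ℕ → Ω → ℤ × ℤ)
    (hXmeas : ∀ n, Measurable (X n))
    (hXindep : iIndepFun X P)
    (hXlaw : ∀ n, Measure.map (X n) P = μ)
    (N : ℕ)
    (x : ℤ × ℤ) (hx1 : 0 ≤ x.1) (hx2 : 0 ≤ x.2) (hxsum : x.1 + x.2 = 2 * N) :
    Tendsto (fun n : ℕ =>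
        P {ω | ∀ k : ℕ, 1 ≤ k → k ≤ n →
            0 ≤ (x + ∑ i ∈ Finset.range k, X i ω).1 ∧
            0 ≤ (x + ∑ i ∈ Finset.range k, X i ω).2} ^ ((n : ℝ)⁻¹))
      atTop
      (𝓝 (ENNReal.ofReal (2 * q * Real.cos (Real.pi / (2 * N + 2))))) := by
  have hsurvival (n : ℕ) : P {ω | ∀ k : ℕ, 1 ≤ k → k ≤ n →
      0 ≤ (x + ∑ i ∈ Finset.range k, X i ω).1 ∧ 0 ≤ (x + ∑ i ∈ Finset.range k, X i ω).2}
      = ENNReal.ofReal (survival q n x) := by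
    rw [← stayProb_stepLaw hq0.le hq, ← measure_staysIn_eq_stayProb (stepLaw q) quarterPlane
      hXmeas hXindep (fun i => (hXlaw i).trans hμ)]
    simp only [staysIn_iff]
    rfl
  have hrate : rate q (2 * N) = 2 * q * Real.cos (Real.pi / (2 * N + 2)) := by
    simp [rate, angle]
  simp_rw [hsurvival, ← hrate]
  refine ((ENNReal.continuous_ofReal.tendsto _).comp (tendsto_survival_rpow_inv hq0 hq ⟨hx1, hx2⟩
    (by exact_mod_cast hxsum))).congr fun n => ?_
  exact (ENNReal.ofReal_rpow_of_nonneg (survival_nonneg hq0.le hq n x) (by positivity)).symm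

/-- **Half-space walks in the quarter plane**: for the random walk on `ℤ²` with steps
`(1,−1), (−1,1), (−1,−1)` of respective probabilities `q, q, p` (`p + 2q = 1`), started at a
point `x` of the diagonal segment `D_{2N} = {(i,j) ∈ Q : i + j = 2N}`, the probability of
staying in the quarter plane `Q` up to time `n` decays at the exponential rate
`2q·cos(π/(2N+2))` (which depends on the starting point). -/
theorem exit_time_quarter_plane_halfspace_walk
    (q : ℝ) (hq0 : 0 < q) (hq : q ≤ 1 / 2)
    (μ : Measure (ℤ × ℤ))
    (hμ : μ = ENNReal.ofReal q • Measure.dirac (1, -1)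
        + ENNReal.ofReal q • Measure.dirac (-1, 1)
        + ENNReal.ofReal (1 - 2 * q) • Measure.dirac (-1, -1))
    (Ω : Type) [MeasurableSpace Ω] (P : Measure Ω) [IsProbabilityMeasure P]
    (X : ℕ → Ω → ℤ × ℤ)
    (hXmeas : ∀ n, Measurable (X n))
    (hXindep : iIndepFun X P)
    (hXlaw : ∀ n, Measure.map (X n) P = μ)
    (N : ℕ) (hN : 1 ≤ N)
    (x : ℤ × ℤ) (hx1 : 0 ≤ x.1) (hx2 : 0 ≤ x.2) (hxsum : x.1 + x.2 = 2 * N) :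
    Tendsto (fun n : ℕ =>
        P {ω | ∀ k : ℕ, 1 ≤ k → k ≤ n →
            0 ≤ (x + ∑ i ∈ Finset.range k, X i ω).1 ∧
            0 ≤ (x + ∑ i ∈ Finset.range k, X i ω).2} ^ ((n : ℝ)⁻¹))
      atTop
      (𝓝 (ENNReal.ofReal (2 * q * Real.cos (Real.pi / (2 * N + 2))))) :=
  exit_time_quarter_plane_halfspace_walk_general q hq0 hq μ hμ Ω P X hXmeas hXindep hXlaw N x hx1
    hx2 hxsum
end

section
/- Let (S̃_n)_{n≥0} be the simple symmetric random walk on ℤ started at x (jumps +1 and −1 each with probability 1/2). Then for every N ≥ 0 and every x ∈ {0, 1, …, 2N}, lim_{n→∞} (P^x[S̃_1 ∈ {0,…,2N}, …, S̃_n ∈ {0,…,2N}])^{1/n} = cos(π/(2N+2)). -/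
open MeasureTheory ProbabilityTheory Filter
open scoped ENNReal Topology
open Real

/-!
Let `q n y` be the probability that the walk started at `y` stays in `I = {0, …, M}` at
times `1, …, n`. Conditioning on the first step (the increments are independent) gives
`q (n + 1) = T (q n)` for the transition operator `T` of the walk killed on leaving `I`, so the
stay probabilities are computed by a deterministic recursion. The function
`φ y = sin (π (y + 1) / (M + 2))` vanishes at `-1` and `M + 1`, hence is an eigenfunction of `T`
on `I` with eigenvalue `λ = cos (π / (M + 2))`, and it is positive on `I`. Since `T` is monotone,
induction gives `φ y λⁿ ≤ q n y ≤ φ y λⁿ / min_I φ`, and the `n`-th root squeezes to `λ`.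
-/

lemma sin_le_sin_of_le_of_le_pi_sub {t a : ℝ} (ht : 0 ≤ t) (hta : t ≤ a) (hat : a ≤ π - t) :
    sin t ≤ sin a := by
  rcases le_total a (π / 2) with h | h
  · exact sin_le_sin_of_le_of_le_pi_div_two (by linarith [pi_pos]) h hta
  · rw [← sin_pi_sub a]
    exact sin_le_sin_of_le_of_le_pi_div_two (by linarith [pi_pos]) (by linarith) (by linarith)

lemma tendsto_const_mul_pow_rpow_inv {c r : ℝ} (hc : 0 < c) (hr : 0 ≤ r) :
    Tendsto (fun n : ℕ => (c * r ^ n) ^ (n : ℝ)⁻¹) atTop (𝓝 r) := by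
  have hroot : Tendsto (fun n : ℕ => c ^ (n : ℝ)⁻¹) atTop (𝓝 1) := by
    simpa [Function.comp_def] using ((continuousAt_const_rpow hc.ne').tendsto).comp
      tendsto_inv_atTop_nhds_zero_nat
  have hlim : Tendsto (fun n : ℕ => c ^ (n : ℝ)⁻¹ * r) atTop (𝓝 r) := by
    simpa using hroot.mul_const r
  refine hlim.congr' ?_
  filter_upwards [eventually_ne_atTop 0] with n hn
  rw [mul_rpow hc.le (pow_nonneg hr n), ← rpow_natCast, ← rpow_mul hr,
    mul_inv_cancel₀ (Nat.cast_ne_zero.mpr hn), rpow_one]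

lemma tendsto_rpow_inv_of_le_of_le_s14 {a : ℕ → ℝ} {c₁ c₂ r : ℝ} (hc₁ : 0 < c₁) (hc₂ : 0 < c₂)
    (hr : 0 ≤ r) (h₁ : ∀ n, c₁ * r ^ n ≤ a n) (h₂ : ∀ n, a n ≤ c₂ * r ^ n) :
    Tendsto (fun n : ℕ => a n ^ (n : ℝ)⁻¹) atTop (𝓝 r) :=
  tendsto_of_tendsto_of_tendsto_of_le_of_le (tendsto_const_mul_pow_rpow_inv hc₁ hr)
    (tendsto_const_mul_pow_rpow_inv hc₂ hr)
    (fun n => rpow_le_rpow (by positivity) (h₁ n) (by positivity))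
    (fun n => rpow_le_rpow ((by positivity : 0 ≤ c₁ * r ^ n).trans (h₁ n)) (h₂ n) (by positivity))

section StayEvent

variable {Ω : Type*}

/-- The walk started at `y` with increments `X m, X (m + 1), …` is in `I` at times `1, …, n`. -/
def stayEvent (X : ℕ → Ω → ℤ) (I : Set ℤ) (m n : ℕ) (y : ℤ) : Set Ω :=
  {ω | ∀ k, 1 ≤ k → k ≤ n → y + ∑ i ∈ Finset.range k, X (m + i) ω ∈ I}

variable {X : ℕ → Ω → ℤ} {I : Set ℤ}

lemma stayEvent_zero (m : ℕ) (y : ℤ) : stayEvent X I m 0 y = Set.univ :=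
  Set.eq_univ_of_forall fun _ k hk hk0 => absurd hk0 (by omega)

lemma mem_stayEvent_succ {m n : ℕ} {y : ℤ} {ω : Ω} :
    ω ∈ stayEvent X I m (n + 1) y ↔
      y + X m ω ∈ I ∧ ω ∈ stayEvent X I (m + 1) n (y + X m ω) := by
  have shift : ∀ k, y + ∑ i ∈ Finset.range (k + 1), X (m + i) ω
      = y + X m ω + ∑ i ∈ Finset.range k, X (m + 1 + i) ω := fun k => by
    rw [Finset.sum_range_succ', add_zero, add_comm (∑ i ∈ Finset.range k, _), ← add_assoc]
    simp only [add_assoc, add_comm 1]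
  constructor
  · intro h
    refine ⟨by simpa using h 1 le_rfl (by omega), fun k hk hkn => ?_⟩
    rw [← shift]
    exact h (k + 1) (by omega) (by omega)
  · rintro ⟨h1, h⟩ k hk hkn
    obtain ⟨k, rfl⟩ : ∃ j, k = j + 1 := ⟨k - 1, by omega⟩
    rw [shift]
    rcases Nat.eq_zero_or_pos k with rfl | hk
    · simpa using h1
    · exact h k hk (by omega)

open Classical in
lemma stayEvent_succ_inter_preimage (m n : ℕ) (y z : ℤ) :
    stayEvent X I m (n + 1) y ∩ X m ⁻¹' {z}
      = if y + z ∈ I then X m ⁻¹' {z} ∩ stayEvent X I (m + 1) n (y + z) else ∅ := by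
  ext ω
  simp only [Set.mem_inter_iff, mem_stayEvent_succ, Set.mem_preimage, Set.mem_singleton_iff]
  split_ifs with hz
  · exact ⟨fun ⟨⟨_, h⟩, hωz⟩ => ⟨hωz, hωz ▸ h⟩, fun ⟨hωz, h⟩ => ⟨⟨hωz ▸ hz, hωz ▸ h⟩, hωz⟩⟩
  · exact ⟨fun ⟨⟨h, _⟩, hωz⟩ => hz (hωz ▸ h), False.elim⟩

lemma measurableSet_stayEvent (m n : ℕ) (y : ℤ) :
    MeasurableSet[⨆ i ∈ Set.Ici m, MeasurableSpace.comap (X i) inferInstance]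
      (stayEvent X I m n y) := by
  have hX : ∀ i, Measurable[⨆ j ∈ Set.Ici m, MeasurableSpace.comap (X j) inferInstance]
      (X (m + i)) := fun i =>
    (comap_measurable (X (m + i))).mono
      (le_iSup₂ (f := fun j (_ : j ∈ Set.Ici m) => MeasurableSpace.comap (X j) inferInstance)
        (m + i) (by simp)) le_rfl
  simp only [stayEvent, Set.ofPred_forall]
  exact .iInter fun k => .iInter fun _ => .iInter fun _ =>
    (measurable_const.add (Finset.measurable_sum _ fun i _ => hX i)) .of_discrete

variable [MeasurableSpace Ω]

lemma measure_stayEvent_succ {P : Measure Ω} (hXmeas : ∀ i, Measurable (X i))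
    (hXindep : iIndepFun X P) (m n : ℕ) (y : ℤ) :
    P (stayEvent X I m (n + 1) y)
      = ∫⁻ z, I.indicator (fun w => P (stayEvent X I (m + 1) n w)) (y + z) ∂(P.map (X m)) := by
  have hindep : Indep (MeasurableSpace.comap (X m) inferInstance)
      (⨆ i ∈ Set.Ici (m + 1), MeasurableSpace.comap (X i) inferInstance) P := by
    simpa using indep_iSup_of_disjoint (fun i => (hXmeas i).comap_le) hXindep
      (S := {m}) (T := Set.Ici (m + 1)) (by simp)
  have fiber : ∀ z, P (stayEvent X I m (n + 1) y ∩ X m ⁻¹' {z})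
      = I.indicator (fun w => P (stayEvent X I (m + 1) n w)) (y + z) * P.map (X m) {z} := by
    intro z
    rw [Measure.map_apply (hXmeas m) (measurableSet_singleton z), stayEvent_succ_inter_preimage]
    by_cases hz : y + z ∈ I
    · rw [Set.indicator_of_mem hz, mul_comm, if_pos hz, (Indep_iff _ _ _).1 hindep _ _
        ⟨{z}, measurableSet_singleton z, rfl⟩ (measurableSet_stayEvent ..)]
    · simp [hz]
  have hunion : stayEvent X I m (n + 1) y = ⋃ z, stayEvent X I m (n + 1) y ∩ X m ⁻¹' {z} := by
    ext ω; simp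
  have hmeas : MeasurableSet (stayEvent X I m (n + 1) y) :=
    iSup₂_le (fun i _ => (hXmeas i).comap_le) _ (measurableSet_stayEvent ..)
  rw [lintegral_countable', ← tsum_congr fiber]
  conv_lhs => rw [hunion]
  exact measure_iUnion ((pairwise_disjoint_fiber (X m)).mono fun _ _ =>
      Disjoint.mono Set.inter_subset_right Set.inter_subset_right)
    fun z => hmeas.inter (hXmeas m (measurableSet_singleton z))

end StayEvent

noncomputable def simpleWalkKilledStep (I : Set ℤ) (f : ℤ → ℝ) (y : ℤ) : ℝ :=
  (I.indicator f (y + 1) + I.indicator f (y - 1)) / 2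

noncomputable def simpleWalkStayProb (I : Set ℤ) (n : ℕ) : ℤ → ℝ :=
  (simpleWalkKilledStep I)^[n] fun _ => 1

section KilledStep

variable {I : Set ℤ}

lemma simpleWalkStayProb_succ (n : ℕ) :
    simpleWalkStayProb I (n + 1) = simpleWalkKilledStep I (simpleWalkStayProb I n) :=
  Function.iterate_succ_apply' ..

lemma simpleWalkKilledStep_mono {f g : ℤ → ℝ} (hfg : ∀ z ∈ I, f z ≤ g z) (y : ℤ) :
    simpleWalkKilledStep I f y ≤ simpleWalkKilledStep I g y := by
  have hind : ∀ z, I.indicator f z ≤ I.indicator g z := fun z => by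
    by_cases hz : z ∈ I <;> simp [hz, hfg]
  exact div_le_div_of_nonneg_right (add_le_add (hind _) (hind _)) zero_le_two

lemma simpleWalkKilledStep_mul_const (f : ℤ → ℝ) (c : ℝ) (y : ℤ) :
    simpleWalkKilledStep I (f · * c) y = simpleWalkKilledStep I f y * c := by
  simp only [simpleWalkKilledStep, Set.indicator_mul_const]
  ring

lemma simpleWalkStayProb_nonneg (n : ℕ) (y : ℤ) : 0 ≤ simpleWalkStayProb I n y := by
  induction n generalizing y with
  | zero => exact zero_le_one
  | succ n ih =>
    rw [simpleWalkStayProb_succ]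
    simpa [simpleWalkKilledStep] using simpleWalkKilledStep_mono (I := I) (f := 0)
      (fun z _ => ih z) y

end KilledStep

lemma measure_stayEvent_eq_ofReal {Ω : Type*} [MeasurableSpace Ω] {P : Measure Ω}
    [IsProbabilityMeasure P] {X : ℕ → Ω → ℤ} (I : Set ℤ) (hXmeas : ∀ i, Measurable (X i))
    (hXindep : iIndepFun X P)
    (hXlaw : ∀ i, P.map (X i) = (2 : ℝ≥0∞)⁻¹ • Measure.dirac 1 + (2 : ℝ≥0∞)⁻¹ • Measure.dirac (-1))
    (n : ℕ) : ∀ m y, P (stayEvent X I m n y) = ENNReal.ofReal (simpleWalkStayProb I n y) := by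
  induction n with
  | zero => intro m y; simp [stayEvent_zero, simpleWalkStayProb]
  | succ n ih =>
    intro m y
    have hind : ∀ z, I.indicator (fun w => P (stayEvent X I (m + 1) n w)) z
        = ENNReal.ofReal (I.indicator (simpleWalkStayProb I n) z) := fun z => by
      by_cases hz : z ∈ I <;> simp [hz, ih]
    have hq : ∀ z, 0 ≤ I.indicator (simpleWalkStayProb I n) z :=
      Set.indicator_nonneg fun z _ => simpleWalkStayProb_nonneg n z
    rw [measure_stayEvent_succ hXmeas hXindep, hXlaw, lintegral_add_measure,
      lintegral_smul_measure, lintegral_smul_measure, lintegral_dirac, lintegral_dirac,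
      hind, hind, simpleWalkStayProb_succ, simpleWalkKilledStep, ← sub_eq_add_neg,
      ENNReal.ofReal_div_of_pos two_pos, ENNReal.ofReal_add (hq _) (hq _)]
    simp [ENNReal.div_eq_inv_mul, mul_add]

section SineMode

variable (M : ℕ)

noncomputable def sineMode (y : ℤ) : ℝ := sin (π * (y + 1) / (M + 2))

lemma sineMode_add_one_add_sineMode_sub_one (y : ℤ) :
    sineMode M (y + 1) + sineMode M (y - 1) = 2 * cos (π / (M + 2)) * sineMode M y := by
  have hplus : π * ((y + 1 : ℤ) + 1 : ℝ) / (M + 2) = π * (y + 1) / (M + 2) + π / (M + 2) := by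
    push_cast; ring
  have hminus : π * ((y - 1 : ℤ) + 1 : ℝ) / (M + 2) = π * (y + 1) / (M + 2) - π / (M + 2) := by
    push_cast; ring
  rw [sineMode, sineMode, sineMode, hplus, hminus, sin_add, sin_sub]
  ring

lemma cos_pi_div_nonneg : 0 ≤ cos (π / (M + 2)) :=
  cos_nonneg_of_neg_pi_div_two_le_of_le (by linarith [pi_pos, show 0 < π / (M + 2) by positivity])
    (div_le_div_of_nonneg_left pi_pos.le two_pos (by linarith [M.cast_nonneg (α := ℝ)]))

lemma sin_pi_div_pos : 0 < sin (π / (M + 2)) :=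
  sin_pos_of_pos_of_lt_pi (by positivity)
    (div_lt_self pi_pos (by linarith [M.cast_nonneg (α := ℝ)]))

variable {M}

lemma simpleWalkKilledStep_sineMode {y : ℤ} (hy : y ∈ Set.Icc 0 (M : ℤ)) :
    simpleWalkKilledStep (Set.Icc 0 M) (sineMode M) y = cos (π / (M + 2)) * sineMode M y := by
  have hvanish : ∀ z, z = y + 1 ∨ z = y - 1 →
      (Set.Icc 0 (M : ℤ)).indicator (sineMode M) z = sineMode M z := by
    refine fun z hz => Set.indicator_apply_eq_self.mpr fun hzM => ?_
    obtain rfl | rfl : z = -1 ∨ z = M + 1 := by simp only [Set.mem_Icc] at hy hzM; omega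
    · simp [sineMode]
    · rw [sineMode, ← sin_pi]; push_cast; congr 1; field_simp; ring
  rw [simpleWalkKilledStep, hvanish _ (.inl rfl), hvanish _ (.inr rfl),
    sineMode_add_one_add_sineMode_sub_one]
  ring

lemma sin_pi_div_le_sineMode {y : ℤ} (hy : y ∈ Set.Icc 0 (M : ℤ)) :
    sin (π / (M + 2)) ≤ sineMode M y := by
  have hy0 : (0 : ℝ) ≤ y := by exact_mod_cast hy.1
  have hyM : (y : ℝ) ≤ M := by exact_mod_cast hy.2
  have hpos : (0 : ℝ) < M + 2 := by positivity
  apply sin_le_sin_of_le_of_le_pi_sub (by positivity)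
  · rw [div_le_div_iff_of_pos_right hpos]; nlinarith [pi_pos]
  · rw [le_sub_iff_add_le, ← add_div, div_le_iff₀ hpos]
    nlinarith [pi_pos]

lemma sineMode_mul_pow_le_simpleWalkStayProb (n : ℕ) {y : ℤ} (hy : y ∈ Set.Icc 0 (M : ℤ)) :
    sineMode M y * cos (π / (M + 2)) ^ n ≤ simpleWalkStayProb (Set.Icc 0 M) n y := by
  induction n generalizing y with
  | zero => simpa [sineMode, simpleWalkStayProb] using sin_le_one _
  | succ n ih =>
    calc sineMode M y * cos (π / (M + 2)) ^ (n + 1)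
        = simpleWalkKilledStep (Set.Icc 0 M) (sineMode M · * cos (π / (M + 2)) ^ n) y := by
          rw [simpleWalkKilledStep_mul_const, simpleWalkKilledStep_sineMode hy]; ring
      _ ≤ simpleWalkStayProb (Set.Icc 0 M) (n + 1) y := by
          rw [simpleWalkStayProb_succ]
          exact simpleWalkKilledStep_mono (fun z hz => ih hz) y

lemma simpleWalkStayProb_mul_sin_le (n : ℕ) {y : ℤ} (hy : y ∈ Set.Icc 0 (M : ℤ)) :
    simpleWalkStayProb (Set.Icc 0 M) n y * sin (π / (M + 2))
      ≤ sineMode M y * cos (π / (M + 2)) ^ n := by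
  induction n generalizing y with
  | zero => simpa [simpleWalkStayProb] using sin_pi_div_le_sineMode hy
  | succ n ih =>
    calc simpleWalkStayProb (Set.Icc 0 M) (n + 1) y * sin (π / (M + 2))
        = simpleWalkKilledStep (Set.Icc 0 M)
            (simpleWalkStayProb (Set.Icc 0 M) n · * sin (π / (M + 2))) y := by
          rw [simpleWalkKilledStep_mul_const, simpleWalkStayProb_succ]
      _ ≤ simpleWalkKilledStep (Set.Icc 0 M) (sineMode M · * cos (π / (M + 2)) ^ n) y :=
          simpleWalkKilledStep_mono (fun z hz => ih hz) y
      _ = sineMode M y * cos (π / (M + 2)) ^ (n + 1) := by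
          rw [simpleWalkKilledStep_mul_const, simpleWalkKilledStep_sineMode hy]; ring

lemma tendsto_simpleWalkStayProb_rpow_inv {y : ℤ} (hy : y ∈ Set.Icc 0 (M : ℤ)) :
    Tendsto (fun n : ℕ => simpleWalkStayProb (Set.Icc 0 M) n y ^ (n : ℝ)⁻¹) atTop
      (𝓝 (cos (π / (M + 2)))) := by
  have hsin := sin_pi_div_pos M
  have hmode := hsin.trans_le (sin_pi_div_le_sineMode hy)
  refine tendsto_rpow_inv_of_le_of_le_s14 hmode (div_pos hmode hsin) (cos_pi_div_nonneg M)
    (sineMode_mul_pow_le_simpleWalkStayProb · hy) fun n => ?_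
  rw [div_mul_eq_mul_div, le_div_iff₀ hsin]
  exact simpleWalkStayProb_mul_sin_le n hy

end SineMode

/-- **Spitzer's lemma**: for the simple symmetric random walk on `ℤ` started at
`x ∈ {0, …, 2N}`, the probability of staying in `{0, …, 2N}` up to time `n` decays at the
exponential rate `cos(π/(2N+2))`. -/
theorem simple_walk_segment_decay_rate
    (μ : Measure ℤ)
    (hμ : μ = (2 : ℝ≥0∞)⁻¹ • Measure.dirac 1 + (2 : ℝ≥0∞)⁻¹ • Measure.dirac (-1))
    (Ω : Type) [MeasurableSpace Ω] (P : Measure Ω) [IsProbabilityMeasure P]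
    (X : ℕ → Ω → ℤ)
    (hXmeas : ∀ n, Measurable (X n))
    (hXindep : iIndepFun X P)
    (hXlaw : ∀ n, Measure.map (X n) P = μ)
    (N : ℕ) (x : ℤ) (hx0 : 0 ≤ x) (hx2N : x ≤ 2 * N) :
    Tendsto (fun n : ℕ =>
        P {ω | ∀ k : ℕ, 1 ≤ k → k ≤ n →
            (x + ∑ i ∈ Finset.range k, X i ω) ∈ Set.Icc (0 : ℤ) (2 * N)} ^ ((n : ℝ)⁻¹))
      atTop
      (𝓝 (ENNReal.ofReal (Real.cos (Real.pi / (2 * N + 2))))) := by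
  subst hμ
  have hcastℤ : ((2 * N : ℕ) : ℤ) = 2 * N := by push_cast; ring
  have hcastℝ : ((2 * N : ℕ) : ℝ) = 2 * N := by push_cast; ring
  have hlimit := ENNReal.tendsto_ofReal
    (tendsto_simpleWalkStayProb_rpow_inv (M := 2 * N) ⟨hx0, hcastℤ ▸ hx2N⟩)
  have hprob := fun n => measure_stayEvent_eq_ofReal (Set.Icc 0 ((2 * N : ℕ) : ℤ))
    hXmeas hXindep hXlaw n 0 x
  simp only [hcastℤ, hcastℝ] at hlimit hprob
  refine hlimit.congr fun n => ?_
  simp only [stayEvent, zero_add] at hprob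
  rw [hprob, ENNReal.ofReal_rpow_of_nonneg (simpleWalkStayProb_nonneg ..) (by positivity)]
end

section
/- Let K ⊆ ℝ^d be a closed convex cone with non-empty interior, and let Y be a random vector in ℝ^d with Gaussian distribution N(m,Γ) (mean m, covariance matrix Γ). If m ∈ K and the affine subspace m + (ker Γ)^⊥ is not contained in any linear hyperplane, then P[Y ∈ int(K)] > 0. -/
open MeasureTheory ProbabilityTheory
open scoped ENNReal RealInnerProductSpace

/-!
`gaussianE m B` is the image of the standard Gaussian measure, which charges every nonempty open
set, under the continuous map `z ↦ m + B z`; hence it charges the open set `int K` as soon as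
`int K` meets `m + range B`, and `range B = (ker (B Bᵀ))ᗮ`. If `m + range B` missed `int K`, then,
`K` being a convex cone containing `m`, so would the linear span of `m` and `range B`, and
Hahn–Banach would give a nonzero functional vanishing on `m` and on `range B`: a hyperplane
containing `m + (ker Γ)ᗮ`.
-/

/-- The standard Gaussian measure on `ℝ^d` (product of `d` standard normal laws). -/
noncomputable def stdGaussianPi (d : ℕ) : Measure (Fin d → ℝ) :=
  Measure.pi fun _ => gaussianReal 0 1

/-- The Gaussian distribution on `ℝ^d` with mean `m` and covariance matrix `Γ = B * Bᵀ`,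
realized as the law of `m + B Z` where `Z` is a standard Gaussian vector. -/
noncomputable def gaussianE {d : ℕ} (m : EuclideanSpace ℝ (Fin d))
    (B : Matrix (Fin d) (Fin d) ℝ) : Measure (EuclideanSpace ℝ (Fin d)) :=
  Measure.map
    (fun z : Fin d → ℝ =>
      m + Matrix.toEuclideanLin B ((EuclideanSpace.equiv (Fin d) ℝ).symm z))
    (stdGaussianPi d)

theorem Matrix.orthogonal_ker_toEuclideanLin_mul_conjTranspose {𝕜 m n : Type*} [RCLike 𝕜]
    [Fintype m] [DecidableEq m] [Fintype n] [DecidableEq n] (B : Matrix m n 𝕜) :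
    (LinearMap.ker (toEuclideanLin (B * B.conjTranspose)))ᗮ =
      LinearMap.range (toEuclideanLin B) := by
  rw [toLpLin_mul_same, toEuclideanLin_conjTranspose_eq_adjoint,
    LinearMap.ker_self_comp_adjoint, ← LinearMap.orthogonal_range,
    Submodule.orthogonal_orthogonal]

theorem LinearMap.le_ker_of_bddBelow_image {E : Type*} [AddCommGroup E] [Module ℝ E]
    (f : E →ₗ[ℝ] ℝ) {V : Submodule ℝ E} (hf : BddBelow (f '' V)) : V ≤ LinearMap.ker f := by
  obtain ⟨u, hu⟩ := hf
  intro v hv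
  rw [LinearMap.mem_ker]
  by_contra hfv
  have := hu ⟨((u - 1) * (f v)⁻¹) • v, V.smul_mem _ hv, rfl⟩
  rw [LinearMap.map_smul, smul_eq_mul, mul_assoc, inv_mul_cancel₀ hfv, mul_one] at this
  linarith

theorem isOpenPosMeasure_gaussianReal (μ : ℝ) {v : NNReal} (hv : v ≠ 0) :
    (gaussianReal μ v).IsOpenPosMeasure :=
  (gaussianReal_absolutelyContinuous' μ hv).isOpenPosMeasure

instance isOpenPosMeasure_stdGaussianPi (d : ℕ) : (stdGaussianPi d).IsOpenPosMeasure :=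
  have := isOpenPosMeasure_gaussianReal 0 one_ne_zero
  Measure.pi.isOpenPosMeasure _

theorem gaussianE_pos_of_isOpen {d : ℕ} {m : EuclideanSpace ℝ (Fin d)}
    {B : Matrix (Fin d) (Fin d) ℝ} {U : Set (EuclideanSpace ℝ (Fin d))} (hU : IsOpen U)
    (hmeet : ∃ v ∈ LinearMap.range (Matrix.toEuclideanLin B), m + v ∈ U) :
    0 < gaussianE m B U := by
  obtain ⟨_, ⟨w, rfl⟩, hw⟩ := hmeet
  have hcont : Continuous fun z : Fin d → ℝ =>
      m + Matrix.toEuclideanLin B ((EuclideanSpace.equiv (Fin d) ℝ).symm z) := by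
    fun_prop
  rw [gaussianE, Measure.map_apply hcont.measurable hU.measurableSet]
  exact (hU.preimage hcont).measure_pos _ ⟨EuclideanSpace.equiv (Fin d) ℝ w, by
    rwa [Set.mem_preimage, ContinuousLinearEquiv.symm_apply_apply]⟩

theorem exists_ne_zero_le_ker_of_disjoint_submodule {E : Type*} [AddCommGroup E] [Module ℝ E]
    [TopologicalSpace E] [IsTopologicalAddGroup E] [ContinuousSMul ℝ E] [LocallyConvexSpace ℝ E]
    {S : Set E} (hSconv : Convex ℝ S) (hSopen : IsOpen S) (hSne : S.Nonempty)
    {W : Submodule ℝ E} (hdisj : Disjoint S W) :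
    ∃ f : StrongDual ℝ E, f ≠ 0 ∧ W ≤ LinearMap.ker (f : E →ₗ[ℝ] ℝ) := by
  obtain ⟨f, u, hfS, hfW⟩ := geometric_hahn_banach_open hSconv hSopen W.convex hdisj
  refine ⟨f, ?_, LinearMap.le_ker_of_bddBelow_image (f : E →ₗ[ℝ] ℝ) ⟨u, ?_⟩⟩
  · rintro rfl
    obtain ⟨x, hx⟩ := hSne
    simpa using (hfS x hx).trans_le (hfW 0 W.zero_mem)
  · rintro _ ⟨w, hw, rfl⟩
    exact hfW w hw

section Cone

open scoped Pointwise

variable {E : Type*} [AddCommGroup E] [Module ℝ E] [TopologicalSpace E] [ContinuousConstSMul ℝ E]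
  {K : Set E}

theorem smul_mem_interior_of_cone (hK : ∀ c : ℝ, 0 ≤ c → ∀ x ∈ K, c • x ∈ K) {r : ℝ}
    (hr : 0 < r) {x : E} (hx : x ∈ interior K) : r • x ∈ interior K := by
  have hsub : r • K ⊆ K := by
    rintro _ ⟨y, hy, rfl⟩
    exact hK r hr.le y hy
  exact interior_mono hsub ((interior_smul₀ hr.ne' K).symm ▸ Set.smul_mem_smul_set hx)

variable [IsTopologicalAddGroup E]

theorem add_mem_interior_of_cone (hKconv : Convex ℝ K)
    (hK : ∀ c : ℝ, 0 ≤ c → ∀ x ∈ K, c • x ∈ K) {x y : E} (hx : x ∈ interior K) (hy : y ∈ K) :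
    x + y ∈ interior K := by
  have hmid : (1 / 2 : ℝ) • x + (1 / 2 : ℝ) • y ∈ interior K :=
    hKconv.combo_interior_self_mem_interior hx hy (by norm_num) (by norm_num) (by norm_num)
  convert smul_mem_interior_of_cone hK two_pos hmid using 1
  rw [smul_add, smul_smul, smul_smul]
  norm_num

theorem disjoint_interior_sup_span_of_cone (hKconv : Convex ℝ K)
    (hK : ∀ c : ℝ, 0 ≤ c → ∀ x ∈ K, c • x ∈ K) {m : E} (hm : m ∈ K) {V : Submodule ℝ E}
    (hV : ∀ v ∈ V, m + v ∉ interior K) : Disjoint (interior K) ↑(V ⊔ Submodule.span ℝ {m}) := by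
  rw [Set.disjoint_right]
  intro _ hw hwK
  obtain ⟨v, hv, _, hm', rfl⟩ := Submodule.mem_sup.1 hw
  obtain ⟨a, rfl⟩ := Submodule.mem_span_singleton.1 hm'
  set c := |a| + 1
  have hc : 0 < c := by positivity
  have hcm : v + c • m ∈ interior K := by
    have := add_mem_interior_of_cone hKconv hK hwK (hK (c - a) (by linarith [le_abs_self a]) m hm)
    rwa [add_assoc, ← add_smul, add_sub_cancel] at this
  refine hV (c⁻¹ • v) (V.smul_mem _ hv) ?_
  convert smul_mem_interior_of_cone hK (inv_pos.2 hc) hcm using 1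
  rw [smul_add, smul_smul, inv_mul_cancel₀ hc.ne', one_smul, add_comm]

end Cone

theorem gaussian_charges_interior_of_cone_general
    {d : ℕ}
    (K : Set (EuclideanSpace ℝ (Fin d)))
    (hKconvex : Convex ℝ K)
    (hKcone : ∀ c : ℝ, 0 ≤ c → ∀ x ∈ K, c • x ∈ K)
    (hKint : (interior K).Nonempty)
    (m : EuclideanSpace ℝ (Fin d))
    (Γ B : Matrix (Fin d) (Fin d) ℝ) (hΓ : B * B.transpose = Γ)
    (hm : m ∈ K)
    (hker : ¬ ∃ u : EuclideanSpace ℝ (Fin d), u ≠ 0 ∧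
      ∀ y ∈ (LinearMap.ker (Matrix.toEuclideanLin Γ))ᗮ, ⟪u, m + y⟫ = 0) :
    0 < gaussianE m B (interior K) := by
  have hrange : (LinearMap.ker (Matrix.toEuclideanLin Γ))ᗮ =
      LinearMap.range (Matrix.toEuclideanLin B) := by
    rw [← hΓ, ← Matrix.conjTranspose_eq_transpose_of_trivial,
      Matrix.orthogonal_ker_toEuclideanLin_mul_conjTranspose]
  refine gaussianE_pos_of_isOpen isOpen_interior ?_
  by_contra! hmiss
  obtain ⟨f, hf, hfker⟩ := exists_ne_zero_le_ker_of_disjoint_submodule hKconvex.interior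
    isOpen_interior hKint (disjoint_interior_sup_span_of_cone hKconvex hKcone hm hmiss)
  have hfm : f m = 0 := hfker (Submodule.mem_sup_right (Submodule.mem_span_singleton_self m))
  refine hker ⟨(InnerProductSpace.toDual ℝ _).symm f, by simpa using hf, fun y hy => ?_⟩
  rw [hrange] at hy
  have hfy : f y = 0 := hfker (Submodule.mem_sup_left hy)
  rw [InnerProductSpace.toDual_symm_apply, map_add, hfm, hfy, add_zero]

/-- **Lemma (Gaussian measure of the cone)**: let `Y` be a Gaussian vector `N(m,Γ)` in `ℝ^d`
(with `Γ = B * Bᵀ`). If `m` belongs to the closed convex cone `K` (with non-empty interior)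
and the affine subspace `m + (ker Γ)^⊥` is not contained in any linear hyperplane, then
`P[Y ∈ int K] > 0`. -/
theorem gaussian_charges_interior_of_cone
    {d : ℕ} (hd : 1 ≤ d)
    (K : Set (EuclideanSpace ℝ (Fin d)))
    (hKclosed : IsClosed K) (hKconvex : Convex ℝ K)
    (hKcone : ∀ c : ℝ, 0 ≤ c → ∀ x ∈ K, c • x ∈ K)
    (hKint : (interior K).Nonempty)
    (m : EuclideanSpace ℝ (Fin d))
    (Γ B : Matrix (Fin d) (Fin d) ℝ) (hΓ : B * B.transpose = Γ)
    (hm : m ∈ K)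
    (hker : ¬ ∃ u : EuclideanSpace ℝ (Fin d), u ≠ 0 ∧
      ∀ y ∈ (LinearMap.ker (Matrix.toEuclideanLin Γ))ᗮ, ⟪u, m + y⟫ = 0) :
    0 < gaussianE m B (interior K) :=
  gaussian_charges_interior_of_cone_general K hKconvex hKcone hKint m Γ B hΓ hm hker
end

section
/- Let μ be a probability measure on ℝ^d and suppose that for some integer k ≥ 1, some δ ≥ 0 and some ε > 0 one has P_μ^0[τ_{K_{-δ}} > k and S_k ∈ K_ε] = γ > 0. Then for every integer ℓ ≥ 1 and every x ∈ K_δ, P_μ^x[τ_K > ℓk and S_{ℓk} − x ∈ K_{ℓε}] ≥ γ^ℓ. -/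
/-! Cut the first `ℓk` increments into `ℓ` consecutive blocks of length `k`. The blocks are
i.i.d., so with probability `γ ^ ℓ` every block is pushing: the walk of the block stays in
`K_{-δ}` and ends in `K_ε`. On that event, after `m` blocks the walk has moved by a point of
`K_{mε}`, and inside the next block it dips by at most `δv`, which the margin of `x ∈ K_δ`
absorbs. -/

open MeasureTheory ProbabilityTheory Finset
open scoped ENNReal

theorem exists_measurableSet_eq_preimage_restrict {β : Type*} [MeasurableSpace β] [Nonempty β]
    {k : ℕ} {S : Set (ℕ → β)}
    (hS : MeasurableSet S) (hloc : ∀ s t : ℕ → β, (∀ i < k, s i = t i) → s ∈ S → t ∈ S) :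
    ∃ G : Set (Fin k → β), MeasurableSet G ∧ S = (fun s (i : Fin k) ↦ s i) ⁻¹' G := by
  let extend (f : Fin k → β) (n : ℕ) : β :=
    if h : n < k then f ⟨n, h⟩ else Classical.arbitrary β
  have hextend : Measurable extend := by
    refine measurable_pi_lambda _ fun n ↦ ?_
    by_cases h : n < k
    · simpa only [extend, dif_pos h] using measurable_pi_apply _
    · simpa only [extend, dif_neg h] using measurable_const
  have hrestrict (s : ℕ → β) : ∀ i < k, extend (fun i ↦ s i) i = s i := fun i hi ↦ by
    simp only [extend, dif_pos hi]
  refine ⟨extend ⁻¹' S, hextend hS, Set.ext fun s ↦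
    ⟨hloc _ _ fun i hi ↦ (hrestrict s i hi).symm, hloc _ _ (hrestrict s)⟩⟩

namespace ProbabilityTheory

variable {Ω β ι : Type*} {mΩ : MeasurableSpace Ω} [MeasurableSpace β] {P : Measure Ω}
  {X : ι → Ω → β}

theorem iIndepFun.map_precomp_eq_infinitePi {κ : Type*} {μ : Measure β}
    (hX : ∀ i, Measurable (X i)) (h : iIndepFun X P) (hlaw : ∀ i, P.map (X i) = μ)
    {g : κ → ι} (hg : g.Injective) :
    P.map (fun ω j ↦ X (g j) ω) = Measure.infinitePi fun _ ↦ μ := by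
  rw [(h.precomp hg).map_fun_eq_infinitePi_map fun j ↦ hX (g j)]
  simp only [hlaw]

theorem iIndepFun.precomp_curry {κ ι' : Type*} (hX : ∀ i, Measurable (X i))
    (h : iIndepFun X P) {c : κ → ι' → ι} (hc : (Function.uncurry c).Injective) :
    iIndepFun (fun a ω b ↦ X (c a b) ω) P := by
  have := h.isProbabilityMeasure
  have (i : ι) : IsProbabilityMeasure (P.map (X i)) :=
    Measure.isProbabilityMeasure_map (hX i).aemeasurable
  have hca (a : κ) : (c a).Injective := fun b b' hbb' ↦
    congrArg Prod.snd (hc (a₁ := (a, b)) (a₂ := (a, b')) hbb')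
  rw [iIndepFun_iff_map_fun_eq_infinitePi_map fun a ↦ measurable_pi_lambda _ fun b ↦ hX _]
  have hcurry : (fun ω a b ↦ X (c a b) ω) =
      MeasurableEquiv.curry κ ι' β ∘ fun ω p ↦ X (Function.uncurry c p) ω := rfl
  rw [hcurry, ← Measure.map_map (MeasurableEquiv.measurable _)
      (measurable_pi_lambda _ fun p ↦ hX _),
    (h.precomp hc).map_fun_eq_infinitePi_map fun p ↦ hX _]
  refine (Measure.infinitePi_map_curry fun a b ↦ P.map (X (c a b))).trans ?_
  congr with a : 1
  exact ((h.precomp (hca a)).map_fun_eq_infinitePi_map fun b ↦ hX _).symm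

theorem iIndepFun.measure_biInter_preimage_eq_pow {ν : Measure β} (hX : ∀ i, Measurable (X i))
    (h : iIndepFun X P) (hlaw : ∀ i, P.map (X i) = ν) {G : Set β} (hG : MeasurableSet G)
    (s : Finset ι) : P (⋂ i ∈ s, X i ⁻¹' G) = ν G ^ #s := by
  rw [h.meas_biInter fun i _ ↦ ⟨G, hG, rfl⟩, ← prod_const]
  refine prod_congr rfl fun i _ ↦ ?_
  rw [← hlaw i, Measure.map_apply (hX i) hG]

theorem iIndepFun.measure_biInter_shift_mem_eq_pow [Nonempty β] {μ : Measure β} {X : ℕ → Ω → β}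
    (hX : ∀ n, Measurable (X n)) (h : iIndepFun X P) (hlaw : ∀ n, P.map (X n) = μ) {k : ℕ}
    {S : Set (ℕ → β)} (hS : MeasurableSet S)
    (hloc : ∀ s t : ℕ → β, (∀ i < k, s i = t i) → s ∈ S → t ∈ S) (ℓ : ℕ) :
    P (⋂ m ∈ range ℓ, {ω | (fun n ↦ X (m * k + n) ω) ∈ S}) = P {ω | (fun n ↦ X n ω) ∈ S} ^ ℓ := by
  obtain ⟨G, hG, rfl⟩ := exists_measurableSet_eq_preimage_restrict hS hloc
  have hblock_inj : (Function.uncurry fun m (i : Fin k) ↦ m * k + i).Injective := by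
    rintro ⟨m, i⟩ ⟨m', i'⟩ hmi
    simp only [Function.uncurry_apply_pair] at hmi
    obtain rfl : m = m' := by
      by_contra hne
      rcases Nat.lt_or_gt_of_ne hne with hlt | hlt <;> nlinarith [i.2, i'.2]
    exact Prod.ext rfl (Fin.ext (Nat.add_left_cancel hmi))
  have hblock_law (m : ℕ) : P.map (fun ω (i : Fin k) ↦ X (m * k + i) ω) =
      Measure.infinitePi fun _ ↦ μ :=
    h.map_precomp_eq_infinitePi hX hlaw fun i j hij ↦ Fin.ext (Nat.add_left_cancel hij)
  calc P (⋂ m ∈ range ℓ, (fun ω (i : Fin k) ↦ X (m * k + i) ω) ⁻¹' G)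
      = (Measure.infinitePi fun _ ↦ μ) G ^ ℓ := by
        rw [(h.precomp_curry hX hblock_inj).measure_biInter_preimage_eq_pow
          (fun m ↦ measurable_pi_lambda _ fun i ↦ hX _) hblock_law hG, card_range]
    _ = P ((fun ω (i : Fin k) ↦ X i ω) ⁻¹' G) ^ ℓ := by
        rw [← h.map_precomp_eq_infinitePi hX hlaw Fin.val_injective,
          Measure.map_apply (measurable_pi_lambda _ fun i ↦ hX _) hG]

end ProbabilityTheory

section ShiftedCone

variable {E : Type*} [AddCommGroup E] [Module ℝ E]

theorem Convex.exists_pointedCone_coe_eq {K : Set E} (hK : Convex ℝ K)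
    (hKsmul : ∀ c : ℝ, 0 ≤ c → ∀ x ∈ K, c • x ∈ K) (hne : K.Nonempty) :
    ∃ C : PointedCone ℝ E, (C : Set E) = K := by
  obtain ⟨x, hx⟩ := hne
  refine ⟨{ carrier := K
            add_mem' := fun {a b} ha hb ↦ ?_
            zero_mem' := by simpa using hKsmul 0 le_rfl x hx
            smul_mem' := fun c y hy ↦ hKsmul c c.2 y hy }, rfl⟩
  have hmid := hK ha hb (by norm_num : (0 : ℝ) ≤ 1 / 2) (by norm_num : (0 : ℝ) ≤ 1 / 2)
    (by norm_num)
  convert hKsmul 2 zero_le_two _ hmid using 1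
  module

variable {C : PointedCone ℝ E} {v : E}

theorem PointedCone.add_mem_image_add_smul {a b : E} {c c' : ℝ}
    (ha : a ∈ (· + c • v) '' (C : Set E)) (hb : b ∈ (· + c' • v) '' (C : Set E)) :
    a + b ∈ (· + (c + c') • v) '' (C : Set E) := by
  obtain ⟨y, hy, rfl⟩ := ha
  obtain ⟨z, hz, rfl⟩ := hb
  exact ⟨y + z, C.add_mem hy hz, by module⟩

theorem PointedCone.image_add_smul_subset (hv : v ∈ C) {c : ℝ} (hc : 0 ≤ c) :
    (· + c • v) '' (C : Set E) ⊆ C := by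
  rintro _ ⟨y, hy, rfl⟩
  exact C.add_mem hy (C.smul_mem hc hv)

def pushingIncrements (K : Set E) (v : E) (δ ε : ℝ) (k : ℕ) : Set (ℕ → E) :=
  {s | (∀ j : ℕ, 1 ≤ j → j ≤ k → (∑ i ∈ range j, s i) ∈ (· + δ • v) '' K) ∧
    (∑ i ∈ range k, s i) ∈ (· + ε • v) '' K}

theorem pushingIncrements_congr {K : Set E} {δ ε : ℝ} {k : ℕ} {s t : ℕ → E}
    (hst : ∀ i < k, s i = t i) (hs : s ∈ pushingIncrements K v δ ε k) :
    t ∈ pushingIncrements K v δ ε k := by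
  have hsum {j : ℕ} (hj : j ≤ k) : ∑ i ∈ range j, s i = ∑ i ∈ range j, t i :=
    sum_congr rfl fun i hi ↦ hst i ((mem_range.1 hi).trans_le hj)
  exact ⟨fun j hj1 hj ↦ hsum hj ▸ hs.1 j hj1 hj, hsum le_rfl ▸ hs.2⟩

theorem measurableSet_pushingIncrements [MeasurableSpace E] [MeasurableAdd₂ E] {K : Set E}
    (hK : MeasurableSet K) (δ ε : ℝ) (k : ℕ) :
    MeasurableSet (pushingIncrements K v δ ε k) := by
  have hshift (c : ℝ) : MeasurableSet ((· + c • v) '' K) := by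
    rw [Set.image_add_right]
    exact measurable_add_const _ hK
  have hsum (j : ℕ) : Measurable fun s : ℕ → E ↦ ∑ i ∈ range j, s i :=
    Finset.measurable_sum _ fun i _ ↦ measurable_pi_apply i
  simp only [pushingIncrements, Set.ofPred_and, Set.ofPred_forall]
  exact (MeasurableSet.iInter fun j ↦ .iInter fun _ ↦ .iInter fun _ ↦ hsum j (hshift δ)).inter
    (hsum k (hshift ε))

theorem Nat.exists_eq_mul_add_of_le_mul {j ℓ k : ℕ} (hj1 : 1 ≤ j) (hj : j ≤ ℓ * k) :
    ∃ m < ℓ, ∃ r, 1 ≤ r ∧ r ≤ k ∧ j = m * k + r := by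
  have hk : 0 < k := Nat.pos_of_ne_zero fun hk ↦ by simp [hk] at hj; omega
  refine ⟨(j - 1) / k, (Nat.div_lt_iff_lt_mul hk).2 (by omega), (j - 1) % k + 1, by omega,
    Nat.mod_lt _ hk, ?_⟩
  have := Nat.div_add_mod' (j - 1) k
  omega

variable {δ ε : ℝ} {k ℓ : ℕ} {s : ℕ → E}

theorem sum_range_mul_mem_of_forall_mem_pushingIncrements
    (hs : ∀ m < ℓ, (fun n ↦ s (m * k + n)) ∈ pushingIncrements (C : Set E) v δ ε k) :
    ∀ m ≤ ℓ, ∑ i ∈ range (m * k), s i ∈ (· + ((m : ℝ) * ε) • v) '' (C : Set E)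
  | 0, _ => ⟨0, C.zero_mem, by simp⟩
  | m + 1, hm => by
    have hsum := C.add_mem_image_add_smul
      (sum_range_mul_mem_of_forall_mem_pushingIncrements hs m (by omega)) (hs m hm).2
    rwa [add_one_mul, sum_range_add, Nat.cast_succ, add_one_mul]

theorem add_sum_range_mem_of_forall_mem_pushingIncrements (hv : v ∈ C) (hε : 0 ≤ ε) {x : E}
    (hx : x ∈ (· + δ • v) '' (C : Set E))
    (hs : ∀ m < ℓ, (fun n ↦ s (m * k + n)) ∈ pushingIncrements (C : Set E) v (-δ) ε k)
    {j : ℕ} (hj1 : 1 ≤ j) (hj : j ≤ ℓ * k) : x + ∑ i ∈ range j, s i ∈ C := by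
  obtain ⟨m, hm, r, hr1, hr, rfl⟩ := Nat.exists_eq_mul_add_of_le_mul hj1 hj
  have hsum := C.add_mem_image_add_smul
    (C.add_mem_image_add_smul hx
      (sum_range_mul_mem_of_forall_mem_pushingIncrements hs m hm.le)) ((hs m hm).1 r hr1 hr)
  rw [add_neg_cancel_comm, add_assoc, ← sum_range_add] at hsum
  exact C.image_add_smul_subset hv (by positivity) hsum

end ShiftedCone

theorem pushing_induction_lemma_general
    {d : ℕ}
    (K : Set (EuclideanSpace ℝ (Fin d)))
    (hKclosed : IsClosed K) (hKconvex : Convex ℝ K)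
    (hKcone : ∀ c : ℝ, 0 ≤ c → ∀ x ∈ K, c • x ∈ K)
    (v : EuclideanSpace ℝ (Fin d)) (hv : v ∈ interior K)
    (μ : Measure (EuclideanSpace ℝ (Fin d)))
    (Ω : Type) [MeasurableSpace Ω] (P : Measure Ω)
    (X : ℕ → Ω → EuclideanSpace ℝ (Fin d))
    (hXmeas : ∀ n, Measurable (X n))
    (hXindep : iIndepFun X P)
    (hXlaw : ∀ n, Measure.map (X n) P = μ)
    (k : ℕ) (δ : ℝ) (ε : ℝ) (hε : 0 < ε)
    (γ : ℝ≥0∞)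
    (hγ : P {ω | (∀ j : ℕ, 1 ≤ j → j ≤ k →
          (∑ i ∈ Finset.range j, X i ω) ∈ (· + (-δ) • v) '' K) ∧
        (∑ i ∈ Finset.range k, X i ω) ∈ (· + ε • v) '' K} = γ)
    (ℓ : ℕ) (x : EuclideanSpace ℝ (Fin d)) (hx : x ∈ (· + δ • v) '' K) :
    γ ^ ℓ ≤ P {ω | (∀ j : ℕ, 1 ≤ j → j ≤ ℓ * k →
          x + ∑ i ∈ Finset.range j, X i ω ∈ K) ∧
        (∑ i ∈ Finset.range (ℓ * k), X i ω) ∈ (· + ((ℓ : ℝ) * ε) • v) '' K} := by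
  have hvK : v ∈ K := interior_subset hv
  obtain ⟨C, rfl⟩ := hKconvex.exists_pointedCone_coe_eq hKcone ⟨v, hvK⟩
  have hS := measurableSet_pushingIncrements (v := v) hKclosed.measurableSet (-δ) ε k
  calc γ ^ ℓ = P (⋂ m ∈ range ℓ,
        {ω | (fun n ↦ X (m * k + n) ω) ∈ pushingIncrements (C : Set _) v (-δ) ε k}) := by
        rw [hXindep.measure_biInter_shift_mem_eq_pow hXmeas hXlaw hS
          (fun _ _ ↦ pushingIncrements_congr), ← hγ]
        rfl
    _ ≤ _ := measure_mono fun ω hω ↦ by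
        simp only [Set.mem_iInter, mem_range] at hω
        exact ⟨fun j ↦ add_sum_range_mem_of_forall_mem_pushingIncrements hvK hε.le hx hω,
          sum_range_mul_mem_of_forall_mem_pushingIncrements hω ℓ le_rfl⟩

/-- **Induction lemma**: suppose that with probability `γ > 0` the walk started at `0` stays
in `K_{-δ} = K - δv` up to time `k` and satisfies `S_k ∈ K_ε = K + εv`. Then for every
`ℓ ≥ 1` and every starting point `x ∈ K_δ = K + δv`,
`P^x[τ_K > ℓk, S_{ℓk} − x ∈ K_{ℓε}] ≥ γ^ℓ`. -/
theorem pushing_induction_lemma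
    {d : ℕ} (hd : 1 ≤ d)
    (K : Set (EuclideanSpace ℝ (Fin d)))
    (hKclosed : IsClosed K) (hKconvex : Convex ℝ K)
    (hKcone : ∀ c : ℝ, 0 ≤ c → ∀ x ∈ K, c • x ∈ K)
    (hKint : (interior K).Nonempty)
    (v : EuclideanSpace ℝ (Fin d)) (hv : v ∈ interior K)
    (μ : Measure (EuclideanSpace ℝ (Fin d))) [IsProbabilityMeasure μ]
    (Ω : Type) [MeasurableSpace Ω] (P : Measure Ω) [IsProbabilityMeasure P]
    (X : ℕ → Ω → EuclideanSpace ℝ (Fin d))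
    (hXmeas : ∀ n, Measurable (X n))
    (hXindep : iIndepFun X P)
    (hXlaw : ∀ n, Measure.map (X n) P = μ)
    (k : ℕ) (hk : 1 ≤ k) (δ : ℝ) (hδ : 0 ≤ δ) (ε : ℝ) (hε : 0 < ε)
    (γ : ℝ≥0∞)
    (hγ : P {ω | (∀ j : ℕ, 1 ≤ j → j ≤ k →
          (∑ i ∈ Finset.range j, X i ω) ∈ (· + (-δ) • v) '' K) ∧
        (∑ i ∈ Finset.range k, X i ω) ∈ (· + ε • v) '' K} = γ)
    (hγpos : 0 < γ)
    (ℓ : ℕ) (hℓ : 1 ≤ ℓ) (x : EuclideanSpace ℝ (Fin d)) (hx : x ∈ (· + δ • v) '' K) :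
    γ ^ ℓ ≤ P {ω | (∀ j : ℕ, 1 ≤ j → j ≤ ℓ * k →
          x + ∑ i ∈ Finset.range j, X i ω ∈ K) ∧
        (∑ i ∈ Finset.range (ℓ * k), X i ω) ∈ (· + ((ℓ : ℝ) * ε) • v) '' K} :=
  pushing_induction_lemma_general K hKclosed hKconvex hKcone v hv μ Ω P X hXmeas hXindep hXlaw k δ ε
    hε γ hγ ℓ x hx
end
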